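/- arXiv:2202.02914 — 14 statements merged into one kernel-verified Lean document; each statement's English description precedes it below -/
import Mathlib

section
/- Let n ≥ 1, let m, L be constants with L ≥ m > 0 satisfying L/m < 3 + 2√2, and let f : ℝⁿ → ℝ be a differentiable function attaining its minimum at x* whose gradient satisfies the sector condition (m(x−x*) − ∇f(x))ᵀ(L(x−x*) − ∇f(x)) ≤ 0 for all x ∈ ℝⁿ. Then the heavy ball iteration x_{t+1} = x_t − α∇f(x_t) + β(x_t − x_{t−1}) with Polyak's parameters α = 4/(√L+√m)² and β = ((√L−√m)/(√L+√m))² globally asymptotically converges to x*: (a) for every ε > 0 there exists δ > 0 such that ‖x_{−1}−x*‖ < δ and ‖x_0−x*‖ < δ imply ‖x_t−x*‖ < ε for all t ≥ 0, and (b) for all initial points x_{−1}, x_0 ∈ ℝⁿ the iterates x_t converge to x*. -/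
open Real Filter RealInnerProductSpace

private lemma geom_two_step (u : ℕ → ℝ) (c1 c2 C lam : ℝ)
    (hlam : 0 ≤ lam) (hc1 : 0 ≤ c1) (hc2 : 0 ≤ c2) (hC : 0 ≤ C)
    (hchar : c1 * lam + c2 ≤ lam ^ 2)
    (h0 : u 0 ≤ C) (h1 : u 1 ≤ C * lam)
    (hrec : ∀ t, u (t + 2) ≤ c1 * u (t + 1) + c2 * u t) :
    ∀ t, u t ≤ C * lam ^ t := by
  intro t
  induction t using Nat.twoStepInduction with
  | zero => simpa using h0
  | one => simpa using h1
  | more t ih ih1 =>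
    have ht : (0:ℝ) ≤ lam ^ t := pow_nonneg hlam t
    calc u (t + 2) ≤ c1 * u (t + 1) + c2 * u t := hrec t
      _ ≤ c1 * (C * lam ^ (t + 1)) + c2 * (C * lam ^ t) :=
          add_le_add (mul_le_mul_of_nonneg_left ih1 hc1) (mul_le_mul_of_nonneg_left ih hc2)
      _ = C * lam ^ t * (c1 * lam + c2) := by ring
      _ ≤ C * lam ^ t * lam ^ 2 := mul_le_mul_of_nonneg_left hchar (mul_nonneg hC ht)
      _ = C * lam ^ (t + 2) := by ring

set_option maxHeartbeats 1000000 in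
/-- Global asymptotic convergence of the heavy ball method with Polyak's
parameters for sector-bounded (possibly non-convex) objectives with
`L/m < 3 + 2√2` (Theorem 1 / `T.circle-criterion`). -/
theorem heavy_ball_polyak_global_convergence
    (n : ℕ) (hn : 1 ≤ n) (m L : ℝ) (hm : 0 < m) (hmL : m ≤ L)
    (hκ : L / m < 3 + 2 * Real.sqrt 2)
    (f : EuclideanSpace ℝ (Fin n) → ℝ) (hf : Differentiable ℝ f)
    (xstar : EuclideanSpace ℝ (Fin n)) (hmin : ∀ x, f xstar ≤ f x)
    (hsector : ∀ x : EuclideanSpace ℝ (Fin n),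
      ⟪m • (x - xstar) - gradient f x, L • (x - xstar) - gradient f x⟫ ≤ 0)
    (α β : ℝ)
    (hα : α = 4 / (Real.sqrt L + Real.sqrt m) ^ 2)
    (hβ : β = ((Real.sqrt L - Real.sqrt m) / (Real.sqrt L + Real.sqrt m)) ^ 2) :
    -- (a) Lyapunov stability at x*
    (∀ ε > (0 : ℝ), ∃ δ > (0 : ℝ), ∀ x : ℕ → EuclideanSpace ℝ (Fin n),
      (∀ t, x (t + 2) = x (t + 1) - α • gradient f (x (t + 1)) + β • (x (t + 1) - x t)) →
      ‖x 0 - xstar‖ < δ → ‖x 1 - xstar‖ < δ → ∀ t, ‖x t - xstar‖ < ε) ∧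
    -- (b) global convergence of the iterates to x*
    (∀ x : ℕ → EuclideanSpace ℝ (Fin n),
      (∀ t, x (t + 2) = x (t + 1) - α • gradient f (x (t + 1)) + β • (x (t + 1) - x t)) →
      Tendsto x atTop (nhds xstar)) := by
  have hL0 : 0 < L := lt_of_lt_of_le hm hmL
  set a := Real.sqrt m with ha
  set b := Real.sqrt L with hb
  have ha2 : a ^ 2 = m := Real.sq_sqrt hm.le
  have hb2 : b ^ 2 = L := Real.sq_sqrt hL0.le
  have ha0 : 0 < a := Real.sqrt_pos.2 hm
  have hab : a ≤ b := Real.sqrt_le_sqrt hmL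
  have hs : 0 < b + a := by linarith
  have hs' : b + a ≠ 0 := ne_of_gt hs
  have has' : a + b ≠ 0 := by intro h; apply hs'; linarith
  have hsq : ((b + a) ^ 2) ≠ 0 := pow_ne_zero _ hs'
  have h2 : Real.sqrt 2 * Real.sqrt 2 = 2 := Real.mul_self_sqrt (by norm_num)
  have hsq2 : (1:ℝ) ≤ Real.sqrt 2 := by nlinarith [Real.sqrt_nonneg 2]
  -- κ condition in terms of square roots
  have hblt : b < (1 + Real.sqrt 2) * a := by
    have hκ' : L < (3 + 2 * Real.sqrt 2) * m := by
      rw [div_lt_iff₀ hm] at hκ; linarith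
    by_contra h
    push_neg at h
    nlinarith [h2, ha0.le, mul_le_mul h h (by positivity) (by linarith)]
  -- the contraction ratio
  set r := (b - a) / (b + a) with hrdef
  have hr0 : 0 ≤ r := div_nonneg (by linarith) hs.le
  have hβr : β = r ^ 2 := hβ
  have hα0 : 0 < α := by rw [hα]; positivity
  -- scalar identities
  have hαc : α * ((m + L) / 2) = 1 + β := by
    rw [hα, hβ, ← ha2, ← hb2, div_pow, div_mul_eq_mul_div, div_eq_iff hsq, add_mul,
      div_mul_cancel₀ _ hsq]
    ring
  have hα2r : α * ((L - m) / 2) = 2 * r := by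
    rw [hα, hrdef, ← ha2, ← hb2, div_mul_eq_mul_div,
      show (2:ℝ) * ((b - a) / (b + a)) = (2 * (b - a)) / (b + a) by ring,
      div_eq_div_iff hsq hs']
    ring
  -- geometric rate
  set lam := max ((1 + Real.sqrt 2) * r) (1/2 : ℝ) with hlamdef
  have hlam_pos : (0:ℝ) < lam := lt_of_lt_of_le (by norm_num) (le_max_right _ _)
  have hlam_lt1 : lam < 1 := by
    apply max_lt _ (by norm_num)
    have hnum : (1 + Real.sqrt 2) * (b - a) < b + a := by nlinarith [hblt, h2, hsq2, ha0]
    have : (1 + Real.sqrt 2) * (b - a) / (b + a) < 1 := (div_lt_one hs).2 hnum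
    rw [hrdef, ← mul_div_assoc]
    exact this
  have hlamge : (1 + Real.sqrt 2) * r ≤ lam := le_max_left _ _
  have hchar : 2 * r * lam + r ^ 2 ≤ lam ^ 2 := by
    have hpos : (0:ℝ) ≤ lam + (Real.sqrt 2 - 1) * r := by nlinarith [hr0, hsq2, hlam_pos.le]
    nlinarith [mul_nonneg (sub_nonneg.2 hlamge) hpos, h2, sq_nonneg r]
  -- sector bound on the gradient
  have hgrad : ∀ y : EuclideanSpace ℝ (Fin n),
      ‖gradient f y - ((m + L) / 2) • (y - xstar)‖ ≤ ((L - m) / 2) * ‖y - xstar‖ := by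
    intro y
    have hsec := hsector y
    set e := y - xstar with he
    set g := gradient f y with hg
    have hee : ⟪e, e⟫ = ‖e‖ ^ 2 := real_inner_self_eq_norm_sq e
    have hexp : ⟪m • e - g, L • e - g⟫ = m * L * ⟪e, e⟫ - (m + L) * ⟪e, g⟫ + ⟪g, g⟫ := by
      simp only [inner_sub_left, inner_sub_right, real_inner_smul_left, real_inner_smul_right,
        real_inner_comm e g]
      ring
    have hnorm : ‖g - ((m + L) / 2) • e‖ ^ 2
        = ⟪g, g⟫ - (m + L) * ⟪e, g⟫ + ((m + L) / 2) ^ 2 * ⟪e, e⟫ := by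
      rw [← real_inner_self_eq_norm_sq]
      simp only [inner_sub_left, inner_sub_right, real_inner_smul_left, real_inner_smul_right,
        real_inner_comm e g]
      ring
    rw [hee] at hexp hnorm
    have hsec2 : m * L * ‖e‖ ^ 2 - (m + L) * ⟪e, g⟫ + ⟪g, g⟫ ≤ 0 := hexp ▸ hsec
    have hkey : ‖g - ((m + L) / 2) • e‖ ^ 2 ≤ (((L - m) / 2) * ‖e‖) ^ 2 := by
      nlinarith [hsec2, hnorm]
    nlinarith [norm_nonneg (g - ((m + L) / 2) • e), norm_nonneg e, hkey,
      mul_nonneg (by linarith : (0:ℝ) ≤ (L - m) / 2) (norm_nonneg e)]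
  -- one-step recurrence for any heavy-ball sequence
  have hrec : ∀ x : ℕ → EuclideanSpace ℝ (Fin n),
      (∀ t, x (t + 2) = x (t + 1) - α • gradient f (x (t + 1)) + β • (x (t + 1) - x t)) →
      ∀ t, ‖x (t + 2) - xstar‖ ≤ 2 * r * ‖x (t + 1) - xstar‖ + r ^ 2 * ‖x t - xstar‖ := by
    intro x hx t
    have hβ' : β = α * ((m + L) / 2) - 1 := by linarith
    have key : x (t + 2) - xstar
        = -(α • (gradient f (x (t + 1)) - ((m + L) / 2) • (x (t + 1) - xstar)))
          - β • (x t - xstar) := by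
      rw [hx t, hβ']
      module
    calc ‖x (t + 2) - xstar‖
        = ‖α • (gradient f (x (t + 1)) - ((m + L) / 2) • (x (t + 1) - xstar))
            + β • (x t - xstar)‖ := by
          rw [key]
          rw [show -(α • (gradient f (x (t + 1)) - ((m + L) / 2) • (x (t + 1) - xstar)))
              - β • (x t - xstar)
              = -((α • (gradient f (x (t + 1)) - ((m + L) / 2) • (x (t + 1) - xstar)))
                + β • (x t - xstar)) by module, norm_neg]
      _ ≤ α * ‖gradient f (x (t + 1)) - ((m + L) / 2) • (x (t + 1) - xstar)‖
            + β * ‖x t - xstar‖ := by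
          refine le_trans (norm_add_le _ _) ?_
          rw [norm_smul, norm_smul, Real.norm_of_nonneg hα0.le,
            Real.norm_of_nonneg (by rw [hβr]; positivity)]
      _ ≤ 2 * r * ‖x (t + 1) - xstar‖ + r ^ 2 * ‖x t - xstar‖ := by
          have := hgrad (x (t + 1))
          have h1 : α * ‖gradient f (x (t + 1)) - ((m + L) / 2) • (x (t + 1) - xstar)‖
              ≤ α * (((L - m) / 2) * ‖x (t + 1) - xstar‖) :=
            mul_le_mul_of_nonneg_left this hα0.le
          rw [hβr]
          nlinarith [h1, hα2r, norm_nonneg (x (t + 1) - xstar)]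
  -- master bound
  have main : ∀ x : ℕ → EuclideanSpace ℝ (Fin n),
      (∀ t, x (t + 2) = x (t + 1) - α • gradient f (x (t + 1)) + β • (x (t + 1) - x t)) →
      ∀ t, ‖x t - xstar‖
        ≤ (max ‖x 0 - xstar‖ (‖x 1 - xstar‖ / lam)) * lam ^ t := by
    intro x hx
    refine geom_two_step (fun t => ‖x t - xstar‖) (2 * r) (r ^ 2) _ lam hlam_pos.le
      (by positivity) (by positivity)
      (le_trans (norm_nonneg _) (le_max_left _ _)) hchar (le_max_left _ _) ?_ (hrec x hx)
    have := le_max_right ‖x 0 - xstar‖ (‖x 1 - xstar‖ / lam)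
    calc ‖x 1 - xstar‖ = ‖x 1 - xstar‖ / lam * lam := by field_simp
      _ ≤ _ := mul_le_mul_of_nonneg_right this hlam_pos.le
  constructor
  · -- (a) stability
    intro ε hε
    refine ⟨ε * lam / 2, by positivity, ?_⟩
    intro x hx h0 h1 t
    have hC : max ‖x 0 - xstar‖ (‖x 1 - xstar‖ / lam) < ε / 2 := by
      apply max_lt
      · nlinarith [hlam_lt1, hlam_pos]
      · rw [div_lt_iff₀ hlam_pos]; nlinarith
    have hb := main x hx t
    have hpow : lam ^ t ≤ 1 := pow_le_one₀ hlam_pos.le hlam_lt1.le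
    have hC0 : (0:ℝ) ≤ max ‖x 0 - xstar‖ (‖x 1 - xstar‖ / lam) :=
      le_trans (norm_nonneg _) (le_max_left _ _)
    nlinarith [hb, mul_le_mul_of_nonneg_left hpow hC0]
  · -- (b) global convergence
    intro x hx
    rw [tendsto_iff_norm_sub_tendsto_zero]
    have htend : Tendsto (fun t : ℕ =>
        (max ‖x 0 - xstar‖ (‖x 1 - xstar‖ / lam)) * lam ^ t) atTop (nhds 0) := by
      have := (tendsto_pow_atTop_nhds_zero_of_lt_one hlam_pos.le hlam_lt1).const_mul
        (max ‖x 0 - xstar‖ (‖x 1 - xstar‖ / lam))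
      simpa using this
    exact squeeze_zero (fun t => norm_nonneg _) (main x hx) htend
end

section
/- For every real β with 0 ≤ β < 1, the minimum over ω ∈ [−π, π] of cos(arg((e^{jω} + √β)/(e^{jω} − √β))), i.e. the minimum of Re(w)/|w| where w = (e^{jω} + √β)/(e^{jω} − √β), equals (1 − β)/(1 + β). -/
/-!
Multiplying `w = (z + s) / (z - s)` by the positive real `|z - s|²` does not change `Re w / |w|`,
and for `|z| = 1` and real `s` one has `(z + s) · conj (z - s) = (1 - s²) - 2 s (Im z) i`.
Hence, with `z = e^{iω}` and `s = √β`, the quantity equals `(1 - β) / √((1 - β)² + 4 β sin² ω)`,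
which is smallest when `sin² ω = 1`, where the root is `1 + β`.
-/

open Real Complex

open ComplexConjugate

namespace Complex

theorem re_div_norm_div_eq_re_mul_conj (a b : ℂ) :
    (a / b).re / ‖a / b‖ = (a * conj b).re / ‖a * conj b‖ := by
  rcases eq_or_ne b 0 with rfl | hb
  · simp
  have hscale : a / b = ((normSq b)⁻¹ : ℝ) * (a * conj b) := by
    rw [div_eq_mul_inv, inv_def]; push_cast; ring
  have hpos : 0 < (normSq b)⁻¹ := inv_pos.2 (normSq_pos.2 hb)
  rw [hscale, re_ofReal_mul, norm_mul, norm_real, Real.norm_of_nonneg hpos.le,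
    mul_div_mul_left _ _ hpos.ne']

theorem add_ofReal_mul_conj_sub_ofReal {z : ℂ} (hz : ‖z‖ = 1) (s : ℝ) :
    (z + s) * conj (z - s) = ((1 - s ^ 2 : ℝ) : ℂ) + ((-2 * s * z.im : ℝ) : ℂ) * I := by
  have hnormSq : z * conj z = 1 := by rw [mul_conj, normSq_eq_norm_sq, hz]; simp
  have hsub := sub_conj z
  rw [map_sub, conj_ofReal]
  push_cast at hsub ⊢
  linear_combination hnormSq - s * hsub

theorem re_div_norm_add_mul_I (x y : ℝ) :
    (x + y * I : ℂ).re / ‖(x + y * I : ℂ)‖ = x / √(x ^ 2 + y ^ 2) := by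
  simp [norm_add_mul_I]

end Complex

theorem div_sqrt_sq_add_sq_le {a y Y : ℝ} (ha : 0 < a) (hy : y ^ 2 ≤ Y ^ 2) :
    a / √(a ^ 2 + Y ^ 2) ≤ a / √(a ^ 2 + y ^ 2) := by
  gcongr

/-- For `0 ≤ β < 1`, the minimum over `ω ∈ [−π, π]` of
`cos(arg((e^{jω} + √β)/(e^{jω} − √β)))`, i.e. of `Re w / |w|` with
`w = (e^{jω} + √β)/(e^{jω} − √β)`, equals `(1 − β)/(1 + β)`. -/
theorem min_cos_arg_heavy_ball (β : ℝ) (hβ0 : 0 ≤ β) (hβ1 : β < 1) :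
    IsLeast
      {r : ℝ | ∃ ω ∈ Set.Icc (-Real.pi) Real.pi,
        r = ((Complex.exp (ω * Complex.I) + (Real.sqrt β : ℂ)) /
              (Complex.exp (ω * Complex.I) - (Real.sqrt β : ℂ))).re /
            ‖((Complex.exp (ω * Complex.I) + (Real.sqrt β : ℂ)) /
              (Complex.exp (ω * Complex.I) - (Real.sqrt β : ℂ)))‖}
      ((1 - β) / (1 + β)) := by
  have hsq : √β ^ 2 = β := sq_sqrt hβ0
  have hvalue (ω : ℝ) :
      ((exp (ω * I) + (√β : ℂ)) / (exp (ω * I) - (√β : ℂ))).re /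
          ‖(exp (ω * I) + (√β : ℂ)) / (exp (ω * I) - (√β : ℂ))‖ =
        (1 - β) / √((1 - β) ^ 2 + (-2 * √β * Real.sin ω) ^ 2) := by
    rw [re_div_norm_div_eq_re_mul_conj, add_ofReal_mul_conj_sub_ofReal (norm_exp_ofReal_mul_I ω),
      re_div_norm_add_mul_I, exp_ofReal_mul_I_im, hsq]
  have hmax : √((1 - β) ^ 2 + (-2 * √β) ^ 2) = 1 + β := by
    rw [mul_pow, hsq, ← sqrt_sq (by linarith : 0 ≤ 1 + β)]
    ring_nf
  refine ⟨⟨π / 2, ⟨by linarith [pi_pos], by linarith [pi_pos]⟩, ?_⟩, ?_⟩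
  · rw [hvalue, Real.sin_pi_div_two, mul_one, hmax]
  · rintro r ⟨ω, -, rfl⟩
    rw [hvalue, ← hmax]
    refine div_sqrt_sq_add_sq_le (sub_pos.2 hβ1) ?_
    rw [mul_pow _ (Real.sin ω)]
    exact mul_le_of_le_one_right (sq_nonneg _) (sin_sq_le_one ω)
end

section
/- Let L ≥ m > 0 with L/m < 3 + 2√2 and set β = ((√L − √m)/(√L + √m))². Then for every ω ∈ ℝ, Re( ((e^{jω} + √β)/(e^{jω} − √β))² ) > 0; that is, the transfer function H(z) = ((z + √β)/(z − √β))² has strictly positive real part everywhere on the unit circle. -/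
open Real Complex

/-!
Write `b = √β = (√L - √m)/(√L + √m)`. Since `3 + 2√2 = (1 + √2)²`, the bound on `L/m` says
exactly `0 ≤ b < √2 - 1`, i.e. `2b < 1 - b²`. For `|z| = 1` one has
`(z + b)(z̄ - b) = (1 - b²) - 2ib·Im z`, so `w = (z + b)/(z - b)` satisfies
`|Im w| ≤ 2b/|z - b|² < (1 - b²)/|z - b|² = Re w`, and then `Re w² = (Re w)² - (Im w)² > 0`.
-/

namespace Complex

lemma re_sq_pos_of_abs_im_lt_re {w : ℂ} (h : |w.im| < w.re) : 0 < (w ^ 2).re := by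
  have : w.im ^ 2 < w.re ^ 2 := sq_lt_sq' (abs_lt.mp h).1 (abs_lt.mp h).2
  rw [pow_two, mul_re]
  nlinarith

variable {u : ℂ} {b : ℝ}

lemma re_add_ofReal_div_sub_ofReal_of_norm_eq_one (hu : ‖u‖ = 1) :
    ((u + b) / (u - b)).re = (1 - b ^ 2) / normSq (u - b) := by
  have hnorm : u.re * u.re + u.im * u.im = 1 := by
    rw [← normSq_apply, normSq_eq_norm_sq, hu, one_pow]
  rw [div_re, ← add_div]
  simp only [add_re, add_im, sub_re, sub_im, ofReal_re, ofReal_im]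
  congr 1
  linear_combination hnorm

lemma im_add_ofReal_div_sub_ofReal :
    ((u + b) / (u - b)).im = -2 * b * u.im / normSq (u - b) := by
  rw [div_im, ← sub_div]
  simp only [add_re, add_im, sub_re, sub_im, ofReal_re, ofReal_im]
  ring

lemma re_sq_add_ofReal_div_sub_ofReal_pos_of_norm_eq_one (hu : ‖u‖ = 1) (hb : |b| < √2 - 1) :
    0 < (((u + b) / (u - b)) ^ 2).re := by
  have hsqrt2 : √2 ^ 2 = 2 := sq_sqrt zero_le_two
  have hb1 : |b| < 1 := by nlinarith [sqrt_nonneg 2]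
  -- `(|b| + 1)² < (√2)² = 2`
  have hgap : 2 * |b| < 1 - b ^ 2 := by nlinarith [sq_abs b, abs_nonneg b]
  have hne : u - b ≠ 0 := by
    intro h
    have : ‖u‖ = |b| := by rw [sub_eq_zero.mp h, norm_real, Real.norm_eq_abs]
    linarith
  have hN : 0 < normSq (u - b) := normSq_pos.mpr hne
  have him : |u.im| ≤ 1 := hu ▸ abs_im_le_norm u
  apply re_sq_pos_of_abs_im_lt_re
  rw [re_add_ofReal_div_sub_ofReal_of_norm_eq_one hu, im_add_ofReal_div_sub_ofReal, abs_div,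
    abs_of_pos hN, div_lt_div_iff_of_pos_right hN, abs_mul, abs_mul]
  calc |-2| * |b| * |u.im| ≤ 2 * |b| := by
        rw [abs_neg, abs_two]
        exact mul_le_of_le_one_right (by positivity) him
    _ < 1 - b ^ 2 := hgap

end Complex

lemma sub_div_add_sqrt_lt_sqrt_two_sub_one {m L : ℝ} (hm : 0 < m) (hκ : L / m < 3 + 2 * √2) :
    (√L - √m) / (√L + √m) < √2 - 1 := by
  have hsqrt2 : √2 ^ 2 = 2 := sq_sqrt zero_le_two
  have hsm : 0 < √m := sqrt_pos.mpr hm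
  have hL : √L < (1 + √2) * √m := by
    have hsq : 3 + 2 * √2 = (1 + √2) ^ 2 := by nlinarith
    calc √L < √((3 + 2 * √2) * m) :=
          (sqrt_lt_sqrt_iff_of_pos (by positivity)).mpr ((div_lt_iff₀ hm).mp hκ)
      _ = (1 + √2) * √m := by rw [sqrt_mul (by positivity), hsq, sqrt_sq (by positivity)]
  have hprod : (2 - √2) * (1 + √2) = √2 := by linear_combination -hsqrt2
  have h2 : 0 < 2 - √2 := by nlinarith
  have hscaled := mul_lt_mul_of_pos_left hL h2
  rw [← mul_assoc, hprod] at hscaled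
  rw [div_lt_iff₀ (by positivity)]
  linarith

/-- For `L ≥ m > 0` with `L/m < 3 + 2√2` and Polyak's inertia parameter
`β = ((√L − √m)/(√L + √m))²`, the transfer function
`H(z) = ((z + √β)/(z − √β))²` has strictly positive real part everywhere on
the unit circle. -/
theorem polyak_transfer_function_spr (m L : ℝ) (hm : 0 < m) (hmL : m ≤ L)
    (hκ : L / m < 3 + 2 * Real.sqrt 2)
    (β : ℝ)
    (hβ : β = ((Real.sqrt L - Real.sqrt m) / (Real.sqrt L + Real.sqrt m)) ^ 2) :
    ∀ ω : ℝ,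
      0 < (((Complex.exp (ω * Complex.I) + (Real.sqrt β : ℂ)) /
            (Complex.exp (ω * Complex.I) - (Real.sqrt β : ℂ))) ^ 2).re := by
  intro ω
  have hratio : 0 ≤ (√L - √m) / (√L + √m) :=
    div_nonneg (sub_nonneg.mpr (sqrt_le_sqrt hmL)) (by positivity)
  have hb : |√β| < √2 - 1 := by
    rw [abs_of_nonneg (sqrt_nonneg β), hβ, sqrt_sq hratio]
    exact sub_div_add_sqrt_lt_sqrt_two_sub_one hm hκ
  exact re_sq_add_ofReal_div_sub_ofReal_pos_of_norm_eq_one (norm_exp_ofReal_mul_I ω) hb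
end

section
/- Let χ(ρ) = 8 − ρ − 8ρ² − 14ρ³ − ρ⁵. Then χ is strictly decreasing on [0, ∞), χ has exactly one real root ρ₀, this root lies in (0, 1), and moreover ρ₀ ∈ (0.6503, 0.6504). -/
open Real Set

/-- The quintic `χ(ρ) = 8 − ρ − 8ρ² − 14ρ³ − ρ⁵` is strictly decreasing on
`[0, ∞)`, has exactly one real root `ρ₀`, and this root satisfies
`ρ₀ ∈ (0, 1)` and `ρ₀ ∈ (0.6503, 0.6504)`. -/
theorem chi_strict_anti_unique_root (χ : ℝ → ℝ)
    (hχ : ∀ ρ : ℝ, χ ρ = 8 - ρ - 8 * ρ ^ 2 - 14 * ρ ^ 3 - ρ ^ 5) :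
    StrictAntiOn χ (Set.Ici (0 : ℝ)) ∧
    (∃! ρ₀ : ℝ, χ ρ₀ = 0) ∧
    (∀ ρ₀ : ℝ, χ ρ₀ = 0 →
      ρ₀ ∈ Set.Ioo (0 : ℝ) 1 ∧ ρ₀ ∈ Set.Ioo (0.6503 : ℝ) 0.6504) := by
  have hanti : StrictAntiOn χ (Set.Ici (0 : ℝ)) := by
    intro a ha b hb hab
    rw [hχ a, hχ b]
    simp only [Set.mem_Ici] at ha hb
    have h2 := pow_le_pow_left₀ ha hab.le 2
    have h3 := pow_le_pow_left₀ ha hab.le 3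
    have h5 := pow_le_pow_left₀ ha hab.le 5
    linarith
  have hneg : ∀ y : ℝ, y < 0 → 0 < χ y := by
    intro y hy
    rw [hχ y]
    nlinarith [sq_nonneg (y + 1/3), sq_nonneg (14*y^2 - 8*y), sq_nonneg y,
      mul_pos (mul_pos (neg_pos.mpr hy) (neg_pos.mpr hy)) (neg_pos.mpr hy),
      sq_nonneg (y^2 + y), sq_nonneg (y^2 - y)]
  have hpos : 0 < χ 0.6503 := by rw [hχ]; norm_num
  have hneg' : χ 0.6504 < 0 := by rw [hχ]; norm_num
  have hcont : ContinuousOn χ (Set.Icc (0.6503 : ℝ) 0.6504) := by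
    have : χ = fun ρ => 8 - ρ - 8 * ρ ^ 2 - 14 * ρ ^ 3 - ρ ^ 5 := funext hχ
    rw [this]; fun_prop
  obtain ⟨c, hc, hcz⟩ : ∃ c ∈ Set.Icc (0.6503 : ℝ) 0.6504, χ c = 0 := by
    have := intermediate_value_Icc' (by norm_num : (0.6503:ℝ) ≤ 0.6504) hcont
    have h0 : (0:ℝ) ∈ Set.Icc (χ 0.6504) (χ 0.6503) := ⟨le_of_lt hneg', le_of_lt hpos⟩
    obtain ⟨c, hc, hcz⟩ := this h0
    exact ⟨c, hc, hcz⟩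
  -- any root lies in Ioo (0.6503, 0.6504)
  have hroot : ∀ ρ₀ : ℝ, χ ρ₀ = 0 → ρ₀ ∈ Set.Ioo (0.6503 : ℝ) 0.6504 := by
    intro ρ₀ h0
    constructor
    · by_contra h
      push_neg at h
      rcases lt_or_ge ρ₀ 0 with h2 | h2
      · exact absurd h0 (ne_of_gt (hneg ρ₀ h2))
      · rcases eq_or_lt_of_le h with rfl | h3
        · exact absurd h0 (ne_of_gt hpos)
        · have := hanti h2 (by norm_num : (0.6503:ℝ) ∈ Set.Ici (0:ℝ)) h3
          rw [h0] at this
          exact absurd hpos (not_lt.mpr (le_of_lt this))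
    · by_contra h
      push_neg at h
      rcases eq_or_lt_of_le h with rfl | h3
      · exact absurd h0 (ne_of_lt hneg')
      · have := hanti (by norm_num : (0.6504:ℝ) ∈ Set.Ici (0:ℝ))
          (le_trans (by norm_num) (le_of_lt h3) : ρ₀ ∈ Set.Ici (0:ℝ)) h3
        rw [h0] at this
        exact absurd hneg' (not_lt.mpr (le_of_lt this))
  refine ⟨hanti, ⟨c, hcz, ?_⟩, ?_⟩
  · intro y hy
    have hyI := hroot y hy
    have hcI := hroot c hcz
    have hy0 : y ∈ Set.Ici (0:ℝ) := le_trans (by norm_num) (le_of_lt hyI.1)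
    have hc0 : c ∈ Set.Ici (0:ℝ) := le_trans (by norm_num) (le_of_lt hcI.1)
    rcases lt_trichotomy y c with h | h | h
    · have := hanti hy0 hc0 h; rw [hy, hcz] at this; linarith
    · exact h
    · have := hanti hc0 hy0 h; rw [hy, hcz] at this; linarith
  · intro ρ₀ h0
    have h := hroot ρ₀ h0
    exact ⟨⟨lt_trans (by norm_num) h.1, lt_trans h.2 (by norm_num)⟩, h⟩
end

section
/- Let ρ ∈ (0, √5 − 2) and define ψ(ω) = ρ⁴ cos ω − 2ρ³ sin²ω − ρ² cos ω − ρ² + 1. Then ψ attains its minimum over [−π, π] at ω = 0, the minimum value is ψ(0) = (1 − ρ²)², and consequently ψ(ω) > 0 for all ω ∈ [−π, π]. -/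
open Real Set

/-- For `ρ ∈ (0, √5 − 2)`, the function
`ψ(ω) = ρ⁴cos ω − 2ρ³sin²ω − ρ²cos ω − ρ² + 1` attains its minimum over
`[−π, π]` at `ω = 0`, the minimum value is `(1 − ρ²)²`, and `ψ` is strictly
positive on `[−π, π]`. -/
theorem psi_min_small_rho (ρ : ℝ) (hρ : ρ ∈ Set.Ioo (0 : ℝ) (Real.sqrt 5 - 2))
    (ψ : ℝ → ℝ)
    (hψ : ∀ ω : ℝ, ψ ω = ρ ^ 4 * Real.cos ω - 2 * ρ ^ 3 * Real.sin ω ^ 2 -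
      ρ ^ 2 * Real.cos ω - ρ ^ 2 + 1) :
    (∀ ω ∈ Set.Icc (-Real.pi) Real.pi, ψ 0 ≤ ψ ω) ∧
    ψ 0 = (1 - ρ ^ 2) ^ 2 ∧
    (∀ ω ∈ Set.Icc (-Real.pi) Real.pi, 0 < ψ ω) := by
  obtain ⟨h0, h1⟩ := hρ
  have h5 : (Real.sqrt 5) ^ 2 = 5 := Real.sq_sqrt (by norm_num)
  have hkey : ρ ^ 2 + 4 * ρ < 1 := by nlinarith [Real.sqrt_nonneg 5]
  have hρ1 : ρ < 1 := by nlinarith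
  have h0' : ψ 0 = (1 - ρ ^ 2) ^ 2 := by
    rw [hψ]; simp [Real.cos_zero, Real.sin_zero]; ring
  have hmin : ∀ ω ∈ Set.Icc (-Real.pi) Real.pi, ψ 0 ≤ ψ ω := by
    intro ω _
    rw [hψ, hψ]
    have hc := Real.cos_le_one ω
    have hc' := Real.neg_one_le_cos ω
    have hs : Real.sin ω ^ 2 = 1 - Real.cos ω ^ 2 := by
      have := Real.sin_sq_add_cos_sq ω; linarith
    rw [hs]
    simp only [Real.cos_zero, Real.sin_zero]
    nlinarith [mul_nonneg (mul_nonneg (sq_nonneg ρ) (sub_nonneg.2 hc))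
        (by nlinarith : (0:ℝ) ≤ 1 - ρ ^ 2 - 4 * ρ),
      mul_nonneg (pow_nonneg h0.le 3) (sq_nonneg (Real.cos ω - 1))]
  refine ⟨hmin, h0', fun ω hω => ?_⟩
  have := hmin ω hω
  nlinarith [sq_nonneg (1 - ρ ^ 2)]
end

section
/- Let ρ ∈ [√5 − 2, 1) and define ψ(ω) = ρ⁴ cos ω − 2ρ³ sin²ω − ρ² cos ω − ρ² + 1 and χ(ρ) = 8 − ρ − 8ρ² − 14ρ³ − ρ⁵. Then the minimum of ψ over [−π, π] is attained at the two points ω = ±arccos((1 − ρ²)/(4ρ)), the minimum value equals χ(ρ)/8, and consequently ψ(ω) > 0 for all ω ∈ [−π, π] if and only if ρ < ρ₀, where ρ₀ is the unique real root of χ. -/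
open Real Set

/-- For `ρ ∈ [√5 − 2, 1)`, the function
`ψ(ω) = ρ⁴cos ω − 2ρ³sin²ω − ρ²cos ω − ρ² + 1` attains its minimum over
`[−π, π]` at the two points `ω = ±arccos((1 − ρ²)/(4ρ))`, the minimum value
equals `χ(ρ)/8` where `χ(ρ) = 8 − ρ − 8ρ² − 14ρ³ − ρ⁵`, and `ψ > 0` on
`[−π, π]` if and only if `ρ < ρ₀`, the unique real root of `χ`. -/
theorem psi_min_large_rho (ρ : ℝ) (hρ : ρ ∈ Set.Ico (Real.sqrt 5 - 2) 1)
    (ψ χ : ℝ → ℝ)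
    (hψ : ∀ ω : ℝ, ψ ω = ρ ^ 4 * Real.cos ω - 2 * ρ ^ 3 * Real.sin ω ^ 2 -
      ρ ^ 2 * Real.cos ω - ρ ^ 2 + 1)
    (hχ : ∀ r : ℝ, χ r = 8 - r - 8 * r ^ 2 - 14 * r ^ 3 - r ^ 5)
    (ρ₀ : ℝ) (hρ₀root : χ ρ₀ = 0) (hρ₀uniq : ∀ r : ℝ, χ r = 0 → r = ρ₀)
    (c : ℝ) (hc : c = Real.arccos ((1 - ρ ^ 2) / (4 * ρ))) :
    (∀ ω ∈ Set.Icc (-Real.pi) Real.pi, ψ c ≤ ψ ω) ∧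
    ψ (-c) = ψ c ∧
    ψ c = χ ρ / 8 ∧
    ((∀ ω ∈ Set.Icc (-Real.pi) Real.pi, 0 < ψ ω) ↔ ρ < ρ₀) := by
  obtain ⟨hρl, hρ1⟩ := hρ
  have h5 : (2:ℝ) < Real.sqrt 5 := by
    nlinarith [Real.sq_sqrt (by norm_num : (0:ℝ) ≤ 5), Real.sqrt_nonneg 5]
  have hρpos : 0 < ρ := by linarith
  have hsq5 : 5 ≤ (ρ + 2) ^ 2 := by
    nlinarith [Real.sq_sqrt (by norm_num : (0:ℝ) ≤ 5), Real.sqrt_nonneg 5]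
  have hx1 : (1 - ρ ^ 2) / (4 * ρ) ≤ 1 := by
    rw [div_le_one (by linarith)]; nlinarith
  have hx0 : -1 ≤ (1 - ρ ^ 2) / (4 * ρ) := by
    have : (0:ℝ) ≤ (1 - ρ ^ 2) / (4 * ρ) := by
      apply div_nonneg <;> nlinarith
    linarith
  have hcos : Real.cos c = (1 - ρ ^ 2) / (4 * ρ) := by
    rw [hc, Real.cos_arccos hx0 hx1]
  have hsc : Real.sin c ^ 2 = 1 - ((1 - ρ ^ 2) / (4 * ρ)) ^ 2 := by
    rw [Real.sin_sq, hcos]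
  have hρne : (4 : ℝ) * ρ ≠ 0 := by positivity
  -- key identity
  have key : ∀ ω : ℝ, ψ ω = ψ c + 2 * ρ ^ 3 * (Real.cos ω - (1 - ρ ^ 2) / (4 * ρ)) ^ 2 := by
    intro ω
    have hsω : Real.sin ω ^ 2 = 1 - Real.cos ω ^ 2 := Real.sin_sq ω
    rw [hψ ω, hψ c, hcos, hsc, hsω]
    field_simp
    ring
  have hval : ψ c = χ ρ / 8 := by
    rw [hψ c, hcos, hsc, hχ]
    field_simp
    ring
  have hmin : ∀ ω ∈ Set.Icc (-Real.pi) Real.pi, ψ c ≤ ψ ω := by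
    intro ω _
    rw [key ω]
    nlinarith [sq_nonneg (Real.cos ω - (1 - ρ ^ 2) / (4 * ρ)), pow_pos hρpos 3]
  have hsymm : ψ (-c) = ψ c := by
    rw [hψ, hψ, Real.cos_neg, Real.sin_neg]
    ring
  -- χ strictly decreasing on nonneg
  have mono : ∀ a b : ℝ, 0 ≤ a → a < b → χ b < χ a := by
    intro a b ha hab
    rw [hχ, hχ]
    have h2 := pow_lt_pow_left₀ hab ha (n := 2) (by norm_num)
    have h3 := pow_lt_pow_left₀ hab ha (n := 3) (by norm_num)
    have h5' := pow_lt_pow_left₀ hab ha (n := 5) (by norm_num)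
    linarith
  have hρ₀nonneg : 0 ≤ ρ₀ := by
    have hcont : Continuous χ := by
      have : χ = fun r => 8 - r - 8 * r ^ 2 - 14 * r ^ 3 - r ^ 5 := funext hχ
      rw [this]
      exact ((((continuous_const.sub continuous_id').sub
        (continuous_const.mul (continuous_pow 2))).sub
        (continuous_const.mul (continuous_pow 3))).sub (continuous_pow 5))
    have h01 : (0:ℝ) ∈ Set.Icc (χ 1) (χ 0) := by
      constructor <;> rw [hχ] <;> norm_num
    have := intermediate_value_Icc' (by norm_num : (0:ℝ) ≤ 1) hcont.continuousOn h01
    obtain ⟨r, hr, hr0⟩ := this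
    have := hρ₀uniq r hr0
    linarith [hr.1, this.symm.le]
  have hchi_iff : 0 < χ ρ ↔ ρ < ρ₀ := by
    constructor
    · intro h
      by_contra hle
      push_neg at hle
      rcases eq_or_lt_of_le hle with heq | hlt
      · rw [heq] at hρ₀root; linarith
      · have := mono ρ₀ ρ hρ₀nonneg hlt
        linarith
    · intro h
      have := mono ρ ρ₀ hρpos.le h
      linarith
  have hc_mem : c ∈ Set.Icc (-Real.pi) Real.pi := by
    rw [hc]
    constructor
    · linarith [Real.arccos_nonneg ((1 - ρ ^ 2) / (4 * ρ)), Real.pi_pos]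
    · exact Real.arccos_le_pi _
  refine ⟨hmin, hsymm, hval, ?_⟩
  constructor
  · intro h
    have := h c hc_mem
    rw [hval] at this
    exact hchi_iff.mp (by linarith)
  · intro h ω hω
    have h1 : 0 < χ ρ := hchi_iff.mpr h
    have h2 : 0 < ψ c := by rw [hval]; linarith
    linarith [hmin ω hω]
end

section
/- Let κ > 1, L > 0, m = L/κ, ρ = 1 − 1/√κ, and let (α, β, γ) = ((1+ρ)/L, ρ²/(2−ρ), ρ²/((1+ρ)(2−ρ))) be the triple momentum parameters. Then, as rational functions of z, [z² − (1+β)z + β + Lα((1+γ)z − γ)] / [z² − (1+β)z + β + mα((1+γ)z − γ)] = z(ρ + z)/((z − ρ)(z − ρ²)); equivalently, the circle-criterion transfer function H(z) = [1 + L Q₀(z)][1 + m Q₀(z)]^{−1}, with Q₀(z) = α((1+γ)z − γ)/(z² − (1+β)z + β) the transfer function of the linear part of the triple momentum method, equals z(ρ + z)/((z − ρ)(z − ρ²)). -/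
open Complex

/-!
Since `Lα = 1 + ρ` and `mα = (1 + ρ)/κ = (1 + ρ)(1 - ρ)²`, the triple momentum parameters make
both closed-loop characteristic polynomials split: the one with gain `L` is `z(z + ρ)` and the
one with gain `m` is `(z - ρ)(z - ρ²)`. The transfer function is their quotient.
-/

section CharPoly

variable {K : Type*} [Field K]

/-- Writing `Q₀ = α · num / den`, this is `den + c · num`; for `c = kα` it is the numerator of
`1 + k Q₀`, i.e. the characteristic polynomial of the loop closed by the gain `k`. -/
def momentumCharPoly (β γ c z : K) : K :=
  z ^ 2 - (1 + β) * z + β + c * ((1 + γ) * z - γ)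

theorem momentumCharPoly_tripleMomentum_upper {ρ : K} (h₁ : 1 + ρ ≠ 0) (h₂ : 2 - ρ ≠ 0)
    (z : K) :
    momentumCharPoly (ρ ^ 2 / (2 - ρ)) (ρ ^ 2 / ((1 + ρ) * (2 - ρ))) (1 + ρ) z =
      z * (ρ + z) := by
  unfold momentumCharPoly
  field_simp
  ring

theorem momentumCharPoly_tripleMomentum_lower {ρ : K} (h₁ : 1 + ρ ≠ 0) (h₂ : 2 - ρ ≠ 0)
    (z : K) :
    momentumCharPoly (ρ ^ 2 / (2 - ρ)) (ρ ^ 2 / ((1 + ρ) * (2 - ρ))) ((1 + ρ) * (1 - ρ) ^ 2) z =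
      (z - ρ) * (z - ρ ^ 2) := by
  unfold momentumCharPoly
  field_simp
  ring

end CharPoly

theorem one_sub_inv_sqrt_mem_Ioo {κ : ℝ} (hκ : 1 < κ) : 1 - 1 / √κ ∈ Set.Ioo 0 1 := by
  have hsqrt : 1 < √κ := by simpa using Real.sqrt_lt_sqrt zero_le_one hκ
  constructor
  · linarith [(div_lt_one (by linarith)).mpr hsqrt]
  · linarith [one_div_pos.mpr (zero_lt_one.trans hsqrt)]

/-- For the triple momentum parameters
`(α, β, γ) = ((1+ρ)/L, ρ²/(2−ρ), ρ²/((1+ρ)(2−ρ)))` with `ρ = 1 − 1/√κ` and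
`m = L/κ`, the circle-criterion transfer function
`H(z) = [z² − (1+β)z + β + Lα((1+γ)z − γ)] / [z² − (1+β)z + β + mα((1+γ)z − γ)]`
equals `z(ρ + z)/((z − ρ)(z − ρ²))` as a rational function of `z`. -/
theorem triple_momentum_transfer_function (κ L : ℝ) (hκ : 1 < κ) (hL : 0 < L)
    (m ρ α β γ : ℝ) (hm : m = L / κ) (hρ : ρ = 1 - 1 / Real.sqrt κ)
    (hα : α = (1 + ρ) / L) (hβ : β = ρ ^ 2 / (2 - ρ))
    (hγ : γ = ρ ^ 2 / ((1 + ρ) * (2 - ρ))) :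
    -- equality as rational functions: cross-multiplied polynomial identity
    (∀ z : ℂ,
      (z ^ 2 - (1 + (β : ℂ)) * z + (β : ℂ) +
          (L : ℂ) * (α : ℂ) * ((1 + (γ : ℂ)) * z - (γ : ℂ))) *
        ((z - (ρ : ℂ)) * (z - (ρ : ℂ) ^ 2)) =
      z * ((ρ : ℂ) + z) *
        (z ^ 2 - (1 + (β : ℂ)) * z + (β : ℂ) +
          (m : ℂ) * (α : ℂ) * ((1 + (γ : ℂ)) * z - (γ : ℂ)))) ∧
    -- pointwise equality of the quotients away from the poles
    (∀ z : ℂ, (z - (ρ : ℂ)) * (z - (ρ : ℂ) ^ 2) ≠ 0 →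
      z ^ 2 - (1 + (β : ℂ)) * z + (β : ℂ) +
        (m : ℂ) * (α : ℂ) * ((1 + (γ : ℂ)) * z - (γ : ℂ)) ≠ 0 →
      (z ^ 2 - (1 + (β : ℂ)) * z + (β : ℂ) +
          (L : ℂ) * (α : ℂ) * ((1 + (γ : ℂ)) * z - (γ : ℂ))) /
        (z ^ 2 - (1 + (β : ℂ)) * z + (β : ℂ) +
          (m : ℂ) * (α : ℂ) * ((1 + (γ : ℂ)) * z - (γ : ℂ))) =
      z * ((ρ : ℂ) + z) / ((z - (ρ : ℂ)) * (z - (ρ : ℂ) ^ 2))) := by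
  obtain ⟨hρ₀, hρ₁⟩ : 0 < ρ ∧ ρ < 1 := hρ ▸ one_sub_inv_sqrt_mem_Ioo hκ
  have hLα : L * α = 1 + ρ := by rw [hα]; field_simp
  have hmα : m * α = (1 + ρ) * (1 - ρ) ^ 2 := by
    rw [hm, hα, hρ, sub_sub_cancel, div_pow, one_pow, Real.sq_sqrt (by linarith)]
    field_simp
  have h₁ : (1 + ρ : ℂ) ≠ 0 := mod_cast (by linarith : 1 + ρ ≠ 0)
  have h₂ : (2 - ρ : ℂ) ≠ 0 := mod_cast (by linarith : 2 - ρ ≠ 0)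
  have hβℂ : (β : ℂ) = ρ ^ 2 / (2 - ρ) := by simp [hβ]
  have hγℂ : (γ : ℂ) = ρ ^ 2 / ((1 + ρ) * (2 - ρ)) := by simp [hγ]
  have hupper (z : ℂ) : momentumCharPoly (β : ℂ) γ (L * α) z = z * (ρ + z) := by
    rw [hβℂ, hγℂ, ← ofReal_mul, hLα]
    exact_mod_cast momentumCharPoly_tripleMomentum_upper h₁ h₂ z
  have hlower (z : ℂ) : momentumCharPoly (β : ℂ) γ (m * α) z = (z - ρ) * (z - ρ ^ 2) := by
    rw [hβℂ, hγℂ, ← ofReal_mul, hmα]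
    exact_mod_cast momentumCharPoly_tripleMomentum_lower h₁ h₂ z
  refine ⟨fun z => ?_, fun z _ _ => ?_⟩
  · rw [← momentumCharPoly, ← momentumCharPoly, hupper, hlower, mul_comm]
  · rw [← momentumCharPoly, ← momentumCharPoly, hupper, hlower]
end

section
/- Let L > m > 0, let ᾱ(β) be defined by ᾱ(β) = 2(1+β)/L for β ≤ (√(L/m) − √(L/m−1))² and ᾱ(β) = 2(1−β)²/((1+β)(L+m) − 4√(βLm)) otherwise, and suppose 0 ≤ β < 1 and 0 < α < ᾱ(β). Then the polynomial z² + ((m+L)α/2 − 1 − β)z + β is Schur stable, i.e. both of its complex roots have modulus strictly less than 1. -/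
/-!
Since `ᾱ(β) ≤ 2(1 + β)/L`, the coefficient `b = (m + L)α/2 − 1 − β` satisfies `|b| < 1 + β`,
which together with `0 ≤ β < 1` is the Schur–Cohn (Jury) condition for the real quadratic
`z² + b z + β`. Non-real roots come in a conjugate pair with product `β`, so they have modulus
`√β < 1`; real roots are excluded from `|x| ≥ 1` because the quadratic is positive at `±1`
while the product of its roots is `β`.
-/

open Real Complex

/-- The GHB stepsize bound `ᾱ(β)` of Theorem `T.SPR`. -/
noncomputable def alphaBar (m L β : ℝ) : ℝ :=
  if β ≤ (Real.sqrt (L / m) - Real.sqrt (L / m - 1)) ^ 2 then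
    2 * (1 + β) / L
  else
    2 * (1 - β) ^ 2 / ((1 + β) * (L + m) - 4 * Real.sqrt (β * L * m))

open scoped ComplexConjugate

theorem alphaBar_le_two_mul_one_add_div {m L β : ℝ} (hm : 0 ≤ m) (hL : 0 < L) (hβ0 : 0 ≤ β)
    (hβ1 : β < 1) : alphaBar m L β ≤ 2 * (1 + β) / L := by
  unfold alphaBar
  split_ifs
  · rfl
  obtain ⟨a, ha, rfl⟩ : ∃ a, 0 ≤ a ∧ a ^ 2 = β := ⟨√β, sqrt_nonneg β, sq_sqrt hβ0⟩
  obtain ⟨c, hc, rfl⟩ : ∃ c, 0 < c ∧ c ^ 2 = L := ⟨√L, sqrt_pos.2 hL, sq_sqrt hL.le⟩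
  obtain ⟨d, hd, rfl⟩ : ∃ d, 0 ≤ d ∧ d ^ 2 = m := ⟨√m, sqrt_nonneg m, sq_sqrt hm⟩
  have ha1 : a < 1 := by nlinarith
  have hsqrt : √(a ^ 2 * c ^ 2 * d ^ 2) = a * c * d := by
    rw [← mul_pow, ← mul_pow, sqrt_sq (by positivity)]
  rw [hsqrt]
  have hD : 0 < (1 + a ^ 2) * (c ^ 2 + d ^ 2) - 4 * (a * c * d) := by
    have : 0 < (1 - a) ^ 2 * (c ^ 2 + d ^ 2) := by positivity
    nlinarith [mul_nonneg ha (sq_nonneg (c - d))]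
  rw [div_le_div_iff₀ hD (by positivity)]
  -- `(1 + β) D - (1 - β)² L` is the perfect square `(2√β√L - (1 + β)√m)²`
  nlinarith [sq_nonneg (2 * a * c - (1 + a ^ 2) * d)]

theorem abs_lt_one_of_quadratic_eq_zero {b c x : ℝ} (hc : |c| < 1) (hb : |b| < 1 + c)
    (hx : x ^ 2 + b * x + c = 0) : |x| < 1 := by
  rw [abs_lt] at hc hb ⊢
  constructor <;> nlinarith

theorem Complex.normSq_eq_of_quadratic_eq_zero {b c : ℝ} {z : ℂ} (him : z.im ≠ 0)
    (hz : z ^ 2 + b * z + c = 0) : normSq z = c := by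
  have hconj : conj z ^ 2 + b * conj z + c = 0 := by
    simpa using congrArg conj hz
  have hne : conj z - z ≠ 0 := by
    rwa [sub_ne_zero, Ne, conj_eq_iff_im, ← Ne]
  -- `conj z` is a root distinct from `z`, hence it is the other root `-b - z`
  have hother : conj z = -b - z := by
    refine sub_eq_zero.1 ((mul_eq_zero.1 ?_).resolve_left hne)
    linear_combination hconj - hz
  have hprod : (normSq z : ℂ) = c := by
    rw [← mul_conj, hother]
    linear_combination -hz
  exact_mod_cast hprod

theorem Complex.norm_lt_one_of_quadratic_eq_zero {b c : ℝ} (hc : |c| < 1) (hb : |b| < 1 + c)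
    {z : ℂ} (hz : z ^ 2 + b * z + c = 0) : ‖z‖ < 1 := by
  by_cases him : z.im = 0
  · rw [← re_add_im z, him, ofReal_zero, zero_mul, add_zero] at hz ⊢
    rw [norm_real, norm_eq_abs]
    exact abs_lt_one_of_quadratic_eq_zero hc hb (by exact_mod_cast hz)
  · have hsq : ‖z‖ ^ 2 < 1 ^ 2 := by
      rw [Complex.sq_norm, normSq_eq_of_quadratic_eq_zero him hz, one_pow]
      exact (abs_lt.1 hc).2
    exact lt_of_pow_lt_pow_left₀ 2 zero_le_one hsq

/-- For `0 ≤ β < 1` and `0 < α < ᾱ(β)`, the polynomial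
`z² + ((m+L)α/2 − 1 − β)z + β` is Schur stable: every complex root has
modulus strictly less than 1. -/
theorem averaged_polynomial_schur_stable (m L : ℝ) (hm : 0 < m) (hmL : m < L)
    (α β : ℝ) (hβ0 : 0 ≤ β) (hβ1 : β < 1) (hα0 : 0 < α) (hα1 : α < alphaBar m L β) :
    ∀ z : ℂ,
      z ^ 2 + (((m + L) * α / 2 - 1 - β : ℝ) : ℂ) * z + (β : ℂ) = 0 →
      ‖z‖ < 1 := by
  intro z hz
  have hL : 0 < L := hm.trans hmL
  have hαL : α * L < 2 * (1 + β) :=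
    (lt_div_iff₀ hL).1 (hα1.trans_le (alphaBar_le_two_mul_one_add_div hm.le hL hβ0 hβ1))
  refine norm_lt_one_of_quadratic_eq_zero ?_ ?_ hz
  · rwa [abs_of_nonneg hβ0]
  · rw [abs_lt]
    constructor <;> nlinarith
end

section
/- Let L > m > 0, let ᾱ(β) be defined by ᾱ(β) = 2(1+β)/L for β ≤ (√(L/m) − √(L/m−1))² and ᾱ(β) = 2(1−β)²/((1+β)(L+m) − 4√(βLm)) otherwise, and suppose 0 ≤ β < 1 and 0 < α < ᾱ(β). Set γ_m = mα − 1 − β and γ_L = Lα − 1 − β. Then: (i) the polynomial z² + γ_m z + β has both roots strictly inside the unit circle, and (ii) for every ω ∈ ℝ, Re[(e^{2jω} + γ_L e^{jω} + β) · conj(e^{2jω} + γ_m e^{jω} + β)] > 0; i.e. the transfer function H(z) = (z² + γ_L z + β)/(z² + γ_m z + β) is strictly positive real. -/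
/-!
The denominator `z² + γ_m z + β` is Schur stable by the Jury conditions `β < 1`,
`0 < mα < 2(1 + β)`; the last one holds since `mα < Lα` and `ᾱ(β) ≤ 2(1 + β)/L`.

At `z = e^{jω}` the real part equals `F(1 - cos ω)` for the convex quadratic
`F(x) = 4βx² + Bx + Lmα²`, `B = 2(1 - β)² - α(L + m)(1 + β)`, and
`F(2) = (2(1 + β) - Lα)(2(1 + β) - mα) > 0`. Since
`F(x) = (2√β x - α√(Lm))² + (B + 4α√(βLm)) x`, `F` is positive on `[0, ∞)` as soon as
`α((1 + β)(L + m) - 4√(βLm)) < 2(1 - β)²`, which is the second branch of `ᾱ`. In the first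
branch the threshold on `β` amounts to `4βL ≤ (1 + β)² m`; then either the vertex of `F` lies
beyond `2`, so that `F ≥ F(2)` on `[0, 2]`, or the same condition on `α` holds.
-/

open Real Complex

theorem norm_lt_one_of_sq_add_mul_add_eq_zero {b c : ℝ} (hc : c < 1) (h₁ : 0 < 1 + b + c)
    (h₂ : 0 < 1 - b + c) {z : ℂ} (hz : z ^ 2 + (b : ℂ) * z + (c : ℂ) = 0) : ‖z‖ < 1 := by
  have hre := congrArg Complex.re hz
  have him := congrArg Complex.im hz
  simp only [pow_two, add_re, add_im, mul_re, mul_im, ofReal_re, ofReal_im, zero_re, zero_im]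
    at hre him
  suffices normSq z < 1 by
    rw [← sq_lt_one_iff₀ (norm_nonneg z), Complex.sq_norm]; exact this
  rw [normSq_apply]
  rcases eq_or_ne z.im 0 with hy | hy
  · rw [hy] at hre ⊢
    have hx : |z.re| < 1 := abs_lt.mpr ⟨by nlinarith, by nlinarith⟩
    nlinarith [abs_mul_abs_self z.re, abs_nonneg z.re]
  · -- a non-real root and its conjugate have product `c`
    have hb : 2 * z.re + b = 0 := mul_left_cancel₀ hy (by linarith)
    nlinarith

theorem re_exp_quadratic_mul_conj (a b c ω : ℝ) :
    ((exp (2 * ω * I) + (a : ℂ) * exp (ω * I) + (c : ℂ)) *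
        (starRingEnd ℂ) (exp (2 * ω * I) + (b : ℂ) * exp (ω * I) + (c : ℂ))).re =
      1 + a * b + c ^ 2 + (a + b) * (1 + c) * Real.cos ω + 2 * c * Real.cos (2 * ω) := by
  have hexp2 : exp (2 * ω * I) = exp (ω * I) ^ 2 := by rw [← Complex.exp_nat_mul]; ring_nf
  rw [hexp2, exp_mul_I, ← ofReal_cos, ← ofReal_sin, Real.cos_two_mul]
  simp only [pow_two, map_add, map_mul, conj_ofReal, conj_I, add_re, add_im, mul_re, mul_im,
    ofReal_re, ofReal_im, I_re, I_im, neg_re, neg_im]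
  linear_combination (1 + (a + b) * Real.cos ω + a * b - 2 * c + (Real.sin ω) ^ 2
    + (Real.cos ω) ^ 2) * Real.cos_sq_add_sin_sq ω

theorem sq_mul_sq_add_mul_add_sq_pos {p q b x : ℝ} (hx : 0 ≤ x) (hq : q ≠ 0)
    (hb : -b < 2 * p * q) : 0 < p ^ 2 * x ^ 2 + b * x + q ^ 2 := by
  have hsq : p ^ 2 * x ^ 2 + b * x + q ^ 2 = (p * x - q) ^ 2 + (b + 2 * p * q) * x := by ring
  rcases hx.eq_or_lt with rfl | hx
  · simpa using sq_pos_of_ne_zero hq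
  · rw [hsq]
    nlinarith [sq_nonneg (p * x - q), mul_pos (by linarith : 0 < b + 2 * p * q) hx]

/-- `√r - √(r - 1)` is the smaller root of `t ^ 2 - 2 * √r * t + 1`. -/
theorem four_mul_mul_le_one_add_sq {r β : ℝ} (hr : 1 ≤ r) (hβ : 0 ≤ β)
    (h : β ≤ (√r - √(r - 1)) ^ 2) : 4 * β * r ≤ (1 + β) ^ 2 := by
  have hp := sq_sqrt (by linarith : 0 ≤ r)
  have hq := sq_sqrt (by linarith : 0 ≤ r - 1)
  have ht := sq_sqrt hβ
  have hqp : √(r - 1) ≤ √r := sqrt_le_sqrt (by linarith)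
  have htpq : √β ≤ √r - √(r - 1) := by
    simpa only [sqrt_sq (sub_nonneg.mpr hqp)] using sqrt_le_sqrt h
  have hroot : 2 * √r * √β ≤ 1 + β := by
    nlinarith [mul_nonneg (sub_nonneg.mpr htpq)
      (by linarith [sqrt_nonneg (r - 1)] : 0 ≤ √r + √(r - 1) - √β)]
  calc 4 * β * r = (2 * √r * √β) ^ 2 := by rw [mul_pow, mul_pow, hp, ht]; ring
    _ ≤ (1 + β) ^ 2 := pow_le_pow_left₀ (by positivity) hroot 2

theorem four_mul_one_add_mul_sqrt_le {β L m : ℝ} (hβ : 0 ≤ β) (hL : 0 ≤ L) (hm : 0 ≤ m) :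
    4 * (1 + β) * √(β * L * m) ≤ 4 * β * L + (1 + β) ^ 2 * m := by
  rw [sqrt_mul' _ hm]
  nlinarith [sq_nonneg (2 * √(β * L) - (1 + β) * √m), sq_sqrt (mul_nonneg hβ hL), sq_sqrt hm]

theorem one_sub_sq_mul_le {β L m : ℝ} (hβ : 0 ≤ β) (hL : 0 ≤ L) (hm : 0 ≤ m) :
    (1 - β) ^ 2 * L ≤ (1 + β) * ((1 + β) * (L + m) - 4 * √(β * L * m)) := by
  nlinarith [four_mul_one_add_mul_sqrt_le hβ hL hm]

theorem alphaBar_denom_pos {β L m : ℝ} (hβ0 : 0 ≤ β) (hβ1 : β < 1) (hL : 0 < L) (hm : 0 ≤ m) :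
    0 < (1 + β) * (L + m) - 4 * √(β * L * m) := by
  have hβ1' : 0 < 1 - β := by linarith
  have hpos : 0 < (1 - β) ^ 2 * L := by positivity
  exact (mul_pos_iff_of_pos_left (by linarith : (0 : ℝ) < 1 + β)).mp
    (hpos.trans_le (one_sub_sq_mul_le hβ0 hL.le hm))

theorem mul_lt_of_lt_alphaBar {m L α β : ℝ} (hβ0 : 0 ≤ β) (hβ1 : β < 1) (hL : 0 < L)
    (hm : 0 ≤ m) (hα : α < alphaBar m L β) : L * α < 2 * (1 + β) := by
  unfold alphaBar at hα
  split_ifs at hα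
  · rwa [lt_div_iff₀ hL, mul_comm] at hα
  · have hD := alphaBar_denom_pos hβ0 hβ1 hL hm
    rw [lt_div_iff₀ hD] at hα
    refine lt_of_mul_lt_mul_right ?_ hD.le
    calc L * α * ((1 + β) * (L + m) - 4 * √(β * L * m))
        < L * (2 * (1 - β) ^ 2) := by rw [mul_assoc]; exact mul_lt_mul_of_pos_left hα hL
      _ ≤ 2 * (1 + β) * ((1 + β) * (L + m) - 4 * √(β * L * m)) := by
        nlinarith [one_sub_sq_mul_le hβ0 hL.le hm]

theorem two_mul_mul_le_sqrt_mul {β L m : ℝ} (hβ : 0 ≤ β) (hm : 0 ≤ m) (hmL : m ≤ L)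
    (h : 4 * β * L ≤ (1 + β) ^ 2 * m) :
    2 * β * (1 + β) * (L + m) ≤ √(β * L * m) * (β ^ 2 + 6 * β + 1) := by
  have hL : 0 ≤ L := hm.trans hmL
  have hN : 0 ≤ β ^ 2 + 6 * β + 1 := by positivity
  rw [← sqrt_sq hN, ← sqrt_mul (by positivity), le_sqrt (by positivity) (by positivity)]
  have hLm : 0 ≤ (1 + β) ^ 2 * L - 4 * β * m := by nlinarith [sq_nonneg (1 - β)]
  nlinarith [mul_nonneg (mul_nonneg hβ hLm) (sub_nonneg.mpr h)]

theorem mul_alphaBar_denom_lt {m L α β : ℝ} (hβ0 : 0 ≤ β) (hβ1 : β < 1) (hm : 0 ≤ m)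
    (hmL : m ≤ L) (hα : 0 ≤ α) (h : 4 * β * L ≤ (1 + β) ^ 2 * m)
    (hvert : α * (1 + β) * (L + m) < 2 * (β ^ 2 + 6 * β + 1)) :
    α * ((1 + β) * (L + m) - 4 * √(β * L * m)) < 2 * (1 - β) ^ 2 := by
  have hkey := mul_le_mul_of_nonneg_left (two_mul_mul_le_sqrt_mul hβ0 hm hmL h) hα
  have hvert' := mul_lt_mul_of_pos_left hvert (by nlinarith : 0 < (1 - β) ^ 2)
  have hN : 0 < β ^ 2 + 6 * β + 1 := by positivity
  refine lt_of_mul_lt_mul_right ?_ hN.le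
  nlinarith

noncomputable def sprQuadratic (m L α β x : ℝ) : ℝ :=
  4 * β * x ^ 2 + (2 * (1 - β) ^ 2 - α * (L + m) * (1 + β)) * x + L * m * α ^ 2

theorem sprQuadratic_one_sub_cos (m L α β ω : ℝ) :
    sprQuadratic m L α β (1 - Real.cos ω) =
      1 + (L * α - 1 - β) * (m * α - 1 - β) + β ^ 2 +
        (L * α - 1 - β + (m * α - 1 - β)) * (1 + β) * Real.cos ω + 2 * β * Real.cos (2 * ω) := by
  rw [sprQuadratic, Real.cos_two_mul]
  ring

theorem sprQuadratic_two (m L α β : ℝ) :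
    sprQuadratic m L α β 2 = (2 * (1 + β) - L * α) * (2 * (1 + β) - m * α) := by
  rw [sprQuadratic]
  ring

theorem sprQuadratic_two_le {m L α β x : ℝ} (hβ : 0 ≤ β) (hx : x ≤ 2)
    (hvert : 2 * (β ^ 2 + 6 * β + 1) ≤ α * (1 + β) * (L + m)) :
    sprQuadratic m L α β 2 ≤ sprQuadratic m L α β x := by
  rw [sprQuadratic, sprQuadratic]
  nlinarith [mul_nonneg (sub_nonneg.mpr hx) (mul_nonneg hβ (sub_nonneg.mpr hx))]

theorem sprQuadratic_pos_of_mul_alphaBar_denom_lt {m L α β x : ℝ} (hm : 0 < m) (hL : 0 < L)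
    (hβ : 0 ≤ β) (hα : α ≠ 0) (hx : 0 ≤ x)
    (h : α * ((1 + β) * (L + m) - 4 * √(β * L * m)) < 2 * (1 - β) ^ 2) :
    0 < sprQuadratic m L α β x := by
  have hq : α * √(L * m) ≠ 0 := mul_ne_zero hα (sqrt_pos.mpr (by positivity)).ne'
  have hpq : 2 * (2 * √β) * (α * √(L * m)) = 4 * α * √(β * L * m) := by
    rw [mul_assoc β, sqrt_mul hβ]; ring
  calc 0 < (2 * √β) ^ 2 * x ^ 2 + (2 * (1 - β) ^ 2 - α * (L + m) * (1 + β)) * x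
        + (α * √(L * m)) ^ 2 :=
        sq_mul_sq_add_mul_add_sq_pos hx hq (by rw [hpq]; linarith)
    _ = sprQuadratic m L α β x := by
        rw [mul_pow, mul_pow, sq_sqrt hβ, sq_sqrt (by positivity), sprQuadratic]; ring

theorem sprQuadratic_pos {m L α β x : ℝ} (hm : 0 < m) (hmL : m < L) (hβ0 : 0 ≤ β)
    (hβ1 : β < 1) (hα0 : 0 < α) (hα : α < alphaBar m L β) (hx0 : 0 ≤ x) (hx2 : x ≤ 2) :
    0 < sprQuadratic m L α β x := by
  have hL : 0 < L := hm.trans hmL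
  rcases le_or_gt (2 * (β ^ 2 + 6 * β + 1)) (α * (1 + β) * (L + m)) with hvert | hvert
  · have hLα := mul_lt_of_lt_alphaBar hβ0 hβ1 hL hm.le hα
    have hmα : m * α < L * α := mul_lt_mul_of_pos_right hmL hα0
    have h2 : 0 < sprQuadratic m L α β 2 := by
      rw [sprQuadratic_two]; exact mul_pos (by linarith) (by linarith)
    exact h2.trans_le (sprQuadratic_two_le hβ0 hx2 hvert)
  · refine sprQuadratic_pos_of_mul_alphaBar_denom_lt hm hL hβ0 hα0.ne' hx0 ?_
    unfold alphaBar at hα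
    split_ifs at hα with hthreshold
    · have h := four_mul_mul_le_one_add_sq ((one_le_div hm).mpr hmL.le) hβ0 hthreshold
      rw [mul_div_assoc', div_le_iff₀ hm] at h
      exact mul_alphaBar_denom_lt hβ0 hβ1 hm.le hmL.le hα0.le h hvert
    · exact (lt_div_iff₀ (alphaBar_denom_pos hβ0 hβ1 hL hm.le)).mp hα

/-- For `0 ≤ β < 1` and `0 < α < ᾱ(β)`, the circle-criterion transfer
function `H(z) = (z² + γ_L z + β)/(z² + γ_m z + β)` of the heavy ball method
is strictly positive real: (i) the denominator is Schur stable, and (ii) the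
real part of the numerator times the conjugate denominator is strictly
positive on the unit circle. -/
theorem heavy_ball_transfer_function_spr (m L : ℝ) (hm : 0 < m) (hmL : m < L)
    (α β : ℝ) (hβ0 : 0 ≤ β) (hβ1 : β < 1) (hα0 : 0 < α) (hα1 : α < alphaBar m L β)
    (γm γL : ℝ) (hγm : γm = m * α - 1 - β) (hγL : γL = L * α - 1 - β) :
    (∀ z : ℂ, z ^ 2 + (γm : ℂ) * z + (β : ℂ) = 0 → ‖z‖ < 1) ∧
    (∀ ω : ℝ,
      0 < ((Complex.exp (2 * ω * Complex.I) + (γL : ℂ) * Complex.exp (ω * Complex.I) + (β : ℂ)) *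
        (starRingEnd ℂ)
          (Complex.exp (2 * ω * Complex.I) + (γm : ℂ) * Complex.exp (ω * Complex.I) + (β : ℂ))).re) := by
  have hmα : 0 < m * α := mul_pos hm hα0
  have hLα := mul_lt_of_lt_alphaBar hβ0 hβ1 (hm.trans hmL) hm.le hα1
  have hmLα : m * α < L * α := mul_lt_mul_of_pos_right hmL hα0
  refine ⟨fun z hz => norm_lt_one_of_sq_add_mul_add_eq_zero hβ1 ?_ ?_ hz, fun ω => ?_⟩
  · linarith
  · linarith
  · rw [re_exp_quadratic_mul_conj, hγL, hγm, ← sprQuadratic_one_sub_cos]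
    exact sprQuadratic_pos hm hmL hβ0 hβ1 hα0 hα1 (by linarith [Real.cos_le_one ω])
      (by linarith [Real.neg_one_le_cos ω])
end

section
/- Let L > m > 0 and let ᾱ(β) = 2(1−β)²/((1+β)(L+m) − 4√(βLm)) for β > (√(L/m) − √(L/m−1))². Then: (i) for every β with (√(L/m) − √(L/m−1))² < β ≤ 4Lm/(L+m)², one has ᾱ(β) ≥ 2(1−β)/(L+m); and (ii) for every β with 4Lm/(L+m)² < β < 1, one has ᾱ(β) < 2(1−β)/(L+m). -/
open Real

/-- Comparison of the GHB stepsize bound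
`ᾱ(β) = 2(1−β)²/((1+β)(L+m) − 4√(βLm))` (second branch, valid for
`β > (√(L/m) − √(L/m−1))²`) with the Ghadimi–Feyzmahdavian–Johansson bound
`2(1−β)/(L+m)`. -/
theorem alphaBar_vs_GFJ_bound (m L : ℝ) (hm : 0 < m) (hmL : m < L) :
    (∀ β : ℝ,
      (Real.sqrt (L / m) - Real.sqrt (L / m - 1)) ^ 2 < β →
      β ≤ 4 * L * m / (L + m) ^ 2 →
      2 * (1 - β) / (L + m) ≤
        2 * (1 - β) ^ 2 / ((1 + β) * (L + m) - 4 * Real.sqrt (β * L * m))) ∧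
    (∀ β : ℝ,
      4 * L * m / (L + m) ^ 2 < β → β < 1 →
      2 * (1 - β) ^ 2 / ((1 + β) * (L + m) - 4 * Real.sqrt (β * L * m)) <
        2 * (1 - β) / (L + m)) := by
  have hL : 0 < L := hm.trans hmL
  have hLm : 0 < L + m := by linarith
  have h4 : 4 * L * m < (L + m) ^ 2 := by nlinarith [sq_nonneg (L - m)]
  constructor
  · intro β hβ1 hβ2
    -- β is positive
    have hr : (0:ℝ) < L / m - 1 := by
      rw [lt_sub_iff_add_lt, zero_add, lt_div_iff₀ hm]; linarith
    have hsq : Real.sqrt (L / m - 1) < Real.sqrt (L / m) :=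
      Real.sqrt_lt_sqrt hr.le (by linarith)
    have hβ0 : 0 < β := (pow_pos (sub_pos.mpr hsq) 2).trans hβ1
    have hβlt1 : β < 1 := lt_of_le_of_lt hβ2 (by rw [div_lt_one (by positivity)]; exact h4)
    set s := Real.sqrt (β * L * m) with hs
    have hs0 : 0 ≤ s := Real.sqrt_nonneg _
    have hs2 : s ^ 2 = β * L * m := Real.sq_sqrt (by positivity)
    have hD : 0 < (1 + β) * (L + m) - 4 * s := by
      have h1 : (4 * s) ^ 2 < ((1 + β) * (L + m)) ^ 2 := by
        nlinarith [sq_nonneg (1 - β), sq_nonneg (L - m), mul_pos hβ0 (mul_pos hL hm)]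
      have h2 := lt_of_pow_lt_pow_left₀ 2 (by positivity : (0:ℝ) ≤ (1 + β) * (L + m)) h1
      linarith
    have hβ4 : β * (L + m) ^ 2 ≤ 4 * L * m := by
      have := (le_div_iff₀ (by positivity : (0:ℝ) < (L + m) ^ 2)).mp hβ2
      linarith
    have hcmp : β * (L + m) ≤ 2 * s := by
      have h1 : (β * (L + m)) ^ 2 ≤ (2 * s) ^ 2 := by
        nlinarith [mul_le_mul_of_nonneg_left hβ4 hβ0.le]
      exact le_of_pow_le_pow_left₀ two_ne_zero (by positivity) h1
    rw [div_le_div_iff₀ hLm hD]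
    nlinarith [mul_le_mul_of_nonneg_left hcmp (by linarith : (0:ℝ) ≤ 1 - β)]
  · intro β hβ1 hβlt1
    have hβ0 : 0 < β := lt_trans (by positivity) hβ1
    set s := Real.sqrt (β * L * m) with hs
    have hs0 : 0 ≤ s := Real.sqrt_nonneg _
    have hs2 : s ^ 2 = β * L * m := Real.sq_sqrt (by positivity)
    have hD : 0 < (1 + β) * (L + m) - 4 * s := by
      have h1 : (4 * s) ^ 2 < ((1 + β) * (L + m)) ^ 2 := by
        nlinarith [sq_nonneg (1 - β), sq_nonneg (L - m), mul_pos hβ0 (mul_pos hL hm)]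
      have h2 := lt_of_pow_lt_pow_left₀ 2 (by positivity : (0:ℝ) ≤ (1 + β) * (L + m)) h1
      linarith
    have hβ4 : 4 * L * m < β * (L + m) ^ 2 := by
      have := (div_lt_iff₀ (by positivity : (0:ℝ) < (L + m) ^ 2)).mp hβ1
      linarith
    have hcmp : 2 * s < β * (L + m) := by
      have h1 : (2 * s) ^ 2 < (β * (L + m)) ^ 2 := by
        nlinarith [mul_lt_mul_of_pos_left hβ4 hβ0]
      exact lt_of_pow_lt_pow_left₀ 2 (by positivity) h1
    rw [div_lt_div_iff₀ hD hLm]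
    nlinarith [mul_lt_mul_of_pos_left hcmp (by linarith : (0:ℝ) < 1 - β)]
end

section
/- Let L ≥ m > 0 and let f : ℝⁿ → ℝ be twice continuously differentiable, attain its minimum at x*, and satisfy the sector condition (m(x−x*) − ∇f(x))ᵀ(L(x−x*) − ∇f(x)) ≤ 0 for all x ∈ ℝⁿ. Then the Hessian Δ = ∇²f(x*) satisfies m I ≤ Δ ≤ L I, i.e. for every v ∈ ℝⁿ, m‖v‖² ≤ vᵀΔv ≤ L‖v‖². -/
/-!
The sector condition is invariant under the rescaling `(x - x*, ∇f x) ↦ (t⁻¹ (x - x*), t⁻¹ ∇f x)`.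
At `x = x*` it forces `∇f x* = 0`, so along `x = x* + t v` the rescaled gradient is the slope of
`t ↦ ∇f (x* + t v)`, which tends to `Δ v`; hence `Δ` itself satisfies the sector condition
`⟪m v - Δ v, L v - Δ v⟫ ≤ 0`. Expanding it and bounding `‖Δ v‖²` below by Cauchy–Schwarz gives
`(⟪Δ v, v⟫ - m‖v‖²)(⟪Δ v, v⟫ - L‖v‖²) ≤ 0`.
-/

open RealInnerProductSpace Filter Topology

variable {E : Type*} [NormedAddCommGroup E] [InnerProductSpace ℝ E]

def SectorCondition (m L : ℝ) (x₀ : E) (G : E → E) : Prop :=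
  ∀ x, ⟪m • (x - x₀) - G x, L • (x - x₀) - G x⟫ ≤ 0

theorem ContDiff.gradient [CompleteSpace E] {f : E → ℝ} {n : WithTop ℕ∞}
    (hf : ContDiff ℝ (n + 1) f) : ContDiff ℝ n (gradient f) :=
  (InnerProductSpace.toDual ℝ E).symm.contDiff.comp (hf.fderiv_right le_rfl)

theorem inner_sector_smul (m L c : ℝ) (u w : E) :
    ⟪m • (c • u) - c • w, L • (c • u) - c • w⟫ = c ^ 2 * ⟪m • u - w, L • u - w⟫ := by
  rw [smul_comm m c, smul_comm L c, ← smul_sub, ← smul_sub, real_inner_smul_left,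
    real_inner_smul_right]
  ring

theorem inner_bounds_of_inner_sector_nonpos {m L : ℝ} (hmL : m ≤ L) {v w : E}
    (h : ⟪m • v - w, L • v - w⟫ ≤ 0) :
    m * ‖v‖ ^ 2 ≤ ⟪w, v⟫ ∧ ⟪w, v⟫ ≤ L * ‖v‖ ^ 2 := by
  have hexp : ⟪m • v - w, L • v - w⟫ = m * L * ‖v‖ ^ 2 - (m + L) * ⟪w, v⟫ + ‖w‖ ^ 2 := by
    simp only [inner_sub_left, inner_sub_right, real_inner_smul_left, real_inner_smul_right,
      real_inner_self_eq_norm_sq, real_inner_comm v w]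
    ring
  have hcs : ⟪w, v⟫ * ⟪w, v⟫ ≤ ‖w‖ ^ 2 * ‖v‖ ^ 2 := by
    simpa only [real_inner_self_eq_norm_sq] using real_inner_mul_inner_self_le w v
  have hprod : (⟪w, v⟫ - m * ‖v‖ ^ 2) * (⟪w, v⟫ - L * ‖v‖ ^ 2) ≤ 0 := by
    nlinarith [mul_nonneg (sq_nonneg ‖v‖) (neg_nonneg.2 (hexp ▸ h))]
  have hmLv : m * ‖v‖ ^ 2 ≤ L * ‖v‖ ^ 2 := by gcongr
  constructor <;> nlinarith

namespace SectorCondition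

variable {m L : ℝ} {x₀ : E} {G : E → E}

theorem apply_eq_zero (h : SectorCondition m L x₀ G) : G x₀ = 0 := by
  simpa using h x₀

theorem inner_sector_fderiv_nonpos (h : SectorCondition m L x₀ G) {D : E →L[ℝ] E}
    (hD : HasFDerivAt G D x₀) (v : E) : ⟪m • v - D v, L • v - D v⟫ ≤ 0 := by
  have hslope : Tendsto (fun t : ℝ => t⁻¹ • G (x₀ + t • v)) (𝓝[≠] 0) (𝓝 (D v)) := by
    simpa [h.apply_eq_zero] using (hD.hasLineDerivAt v).tendsto_slope_zero
  have hlim : Tendsto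
      (fun t : ℝ => ⟪m • v - t⁻¹ • G (x₀ + t • v), L • v - t⁻¹ • G (x₀ + t • v)⟫)
      (𝓝[≠] 0) (𝓝 ⟪m • v - D v, L • v - D v⟫) :=
    (tendsto_const_nhds.sub hslope).inner (tendsto_const_nhds.sub hslope)
  refine le_of_tendsto hlim ?_
  filter_upwards [self_mem_nhdsWithin] with t (ht : t ≠ 0)
  have hv : v = t⁻¹ • (t • v) := (inv_smul_smul₀ ht v).symm
  have hx := h (x₀ + t • v)
  rw [add_sub_cancel_left] at hx
  rw [hv, inner_sector_smul, ← hv]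
  exact mul_nonpos_of_nonneg_of_nonpos (sq_nonneg _) hx

end SectorCondition

theorem sector_condition_hessian_bounds_general
    (n : ℕ) (m L : ℝ) (hmL : m ≤ L)
    (f : EuclideanSpace ℝ (Fin n) → ℝ) (hf : ContDiff ℝ 2 f)
    (xstar : EuclideanSpace ℝ (Fin n))
    (hsector : ∀ x : EuclideanSpace ℝ (Fin n),
      ⟪m • (x - xstar) - gradient f x, L • (x - xstar) - gradient f x⟫ ≤ 0) :
    ∀ v : EuclideanSpace ℝ (Fin n),
      m * ‖v‖ ^ 2 ≤ ⟪fderiv ℝ (fun x => gradient f x) xstar v, v⟫ ∧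
      ⟪fderiv ℝ (fun x => gradient f x) xstar v, v⟫ ≤ L * ‖v‖ ^ 2 := by
  intro v
  have hdiff : Differentiable ℝ (gradient f) :=
    (ContDiff.gradient (n := 1) hf).differentiable one_ne_zero
  have hsectorD := SectorCondition.inner_sector_fderiv_nonpos hsector (hdiff xstar).hasFDerivAt v
  exact inner_bounds_of_inner_sector_nonpos hmL hsectorD

/-- If a twice continuously differentiable `f` attains its minimum at `x*`
and its gradient satisfies the sector condition with constants
`L ≥ m > 0`, then the Hessian `Δ = ∇²f(x*)` (the derivative of the gradient
at `x*`) satisfies `mI ≤ Δ ≤ LI` in the Loewner order: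
`m‖v‖² ≤ vᵀΔv ≤ L‖v‖²` for every `v`. -/
theorem sector_condition_hessian_bounds
    (n : ℕ) (m L : ℝ) (hm : 0 < m) (hmL : m ≤ L)
    (f : EuclideanSpace ℝ (Fin n) → ℝ) (hf : ContDiff ℝ 2 f)
    (xstar : EuclideanSpace ℝ (Fin n)) (hmin : ∀ x, f xstar ≤ f x)
    (hsector : ∀ x : EuclideanSpace ℝ (Fin n),
      ⟪m • (x - xstar) - gradient f x, L • (x - xstar) - gradient f x⟫ ≤ 0) :
    ∀ v : EuclideanSpace ℝ (Fin n),
      m * ‖v‖ ^ 2 ≤ ⟪fderiv ℝ (fun x => gradient f x) xstar v, v⟫ ∧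
      ⟪fderiv ℝ (fun x => gradient f x) xstar v, v⟫ ≤ L * ‖v‖ ^ 2 :=
  sector_condition_hessian_bounds_general n m L hmL f hf xstar hsector
end

section
/- Let 0 < m ≤ L, 0 ≤ β < 1, 0 < α < 2(1+β)/L, and set γ_m = mα − 1 − β and γ_L = Lα − 1 − β. Define R(α, β) = sup over λ ∈ [m, L] of the maximum modulus of the roots of z² + (αλ − 1 − β)z + β. Then: R = √β when γ_L² < 4β and γ_m² < 4β; R = max(√β, (γ_L + √(γ_L² − 4β))/2) when γ_L² ≥ 4β and γ_m² < 4β; R = max(√β, (−γ_m + √(γ_m² − 4β))/2) when γ_L² < 4β and γ_m² ≥ 4β; and R = max(√β, (γ_L + √(γ_L² − 4β))/2, (−γ_m + √(γ_m² − 4β))/2) when γ_L² ≥ 4β and γ_m² ≥ 4β. -/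
/-!
A real quadratic `z² + c z + b` has either two conjugate non-real roots, both of modulus `√b`,
or two real roots, the larger in modulus being `(|c| + √(c² - 4b)) / 2`. Since `Real.sqrt` vanishes
on negative numbers, in both cases the largest root modulus is `max √b ((|c| + √(c² - 4b)) / 2)`,
which is increasing in `|c|`. For `λ ∈ [m, L]` the coefficient `c = αλ - 1 - β` ranges
monotonically over `[γ_m, γ_L]`, so the supremum is attained at `λ = m` or `λ = L`, and comparing
the two endpoint values with `√β` gives the four cases.
-/

open Real Complex Set
open scoped ComplexConjugate

/-- The larger root of `x² - c x + b` when `4 b ≤ c²`. -/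
noncomputable def largeRoot (b c : ℝ) : ℝ := (c + √(c ^ 2 - 4 * b)) / 2

noncomputable def quadRootRadius (b c : ℝ) : ℝ := max √b (largeRoot b |c|)

section LargeRoot

variable {b c : ℝ}

lemma largeRoot_sq_sub_mul_add (h : 4 * b ≤ c ^ 2) :
    largeRoot b c ^ 2 - c * largeRoot b c + b = 0 := by
  have hd : √(c ^ 2 - 4 * b) ^ 2 = c ^ 2 - 4 * b := Real.sq_sqrt (by linarith)
  unfold largeRoot
  linear_combination hd / 4

lemma largeRoot_nonneg (hc : 0 ≤ c) : 0 ≤ largeRoot b c := by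
  unfold largeRoot
  positivity

lemma sqrt_four_mul (x : ℝ) : √(4 * x) = 2 * √x := by
  rw [Real.sqrt_mul zero_le_four, show (4 : ℝ) = 2 ^ 2 by norm_num, Real.sqrt_sq zero_le_two]

lemma two_mul_sqrt_le_abs (h : 4 * b ≤ c ^ 2) : 2 * √b ≤ |c| := by
  rw [← sqrt_four_mul, ← Real.sqrt_sq_eq_abs]
  exact Real.sqrt_le_sqrt h

lemma abs_le_two_mul_sqrt (h : c ^ 2 ≤ 4 * b) : |c| ≤ 2 * √b := by
  rw [← sqrt_four_mul, ← Real.sqrt_sq_eq_abs]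
  exact Real.sqrt_le_sqrt h

lemma sqrt_le_largeRoot (h : 4 * b ≤ c ^ 2) (hc : 0 ≤ c) : √b ≤ largeRoot b c := by
  have := two_mul_sqrt_le_abs h
  rw [abs_of_nonneg hc] at this
  unfold largeRoot
  linarith [Real.sqrt_nonneg (c ^ 2 - 4 * b)]

lemma largeRoot_le_sqrt (h : c ^ 2 ≤ 4 * b) : largeRoot b c ≤ √b := by
  have := abs_le_two_mul_sqrt h
  unfold largeRoot
  rw [Real.sqrt_eq_zero'.2 (by linarith)]
  linarith [le_abs_self c]

lemma largeRoot_le_largeRoot_abs : largeRoot b c ≤ largeRoot b |c| := by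
  unfold largeRoot
  rw [sq_abs]
  linarith [le_abs_self c]

lemma monotoneOn_largeRoot : MonotoneOn (largeRoot b) (Ici 0) := by
  intro c hc c' _ hcc'
  have hsq : c ^ 2 - 4 * b ≤ c' ^ 2 - 4 * b := by nlinarith [mem_Ici.1 hc]
  unfold largeRoot
  linarith [Real.sqrt_le_sqrt hsq]

end LargeRoot

section QuadraticRoots

variable {b c : ℝ}

lemma norm_eq_sqrt_of_quadratic_root_of_im_ne_zero {z : ℂ}
    (hz : z ^ 2 + c * z + b = 0) (him : z.im ≠ 0) : ‖z‖ = √b := by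
  have hconj : conj z ^ 2 + c * conj z + b = 0 := by simpa using congrArg conj hz
  have hne : conj z - z ≠ 0 := fun h => him (by
    have him' := congrArg im h
    simp only [sub_im, conj_im, zero_im] at him'
    linarith)
  -- the two roots `z` and `conj z` have sum `-c` and product `b`
  have hfac : (conj z - z) * (conj z + z + c) = 0 := by linear_combination hconj - hz
  have hsum : conj z = -z - c := by linear_combination (mul_eq_zero.1 hfac).resolve_left hne
  have hnormSq : (normSq z : ℂ) = b := by
    rw [← Complex.mul_conj, hsum]
    linear_combination -hz
  rw [Complex.norm_def, (by exact_mod_cast hnormSq : normSq z = b)]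

lemma abs_le_largeRoot_of_quadratic_root {x : ℝ} (hx : x ^ 2 + c * x + b = 0) :
    |x| ≤ largeRoot b |c| := by
  have hdisc : c ^ 2 - 4 * b = (2 * x + c) ^ 2 := by linear_combination (-4) * hx
  have htri : |2 * x + c - c| ≤ |2 * x + c| + |c| := abs_sub _ _
  unfold largeRoot
  rw [sq_abs, hdisc, Real.sqrt_sq_eq_abs]
  rw [add_sub_cancel_right, abs_mul, abs_two] at htri
  linarith

lemma norm_le_quadRootRadius {z : ℂ} (hz : z ^ 2 + c * z + b = 0) :
    ‖z‖ ≤ quadRootRadius b c := by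
  rcases ne_or_eq z.im 0 with him | him
  · exact le_max_of_le_left (norm_eq_sqrt_of_quadratic_root_of_im_ne_zero hz him).le
  · have hzre : z = (z.re : ℂ) := Complex.ext rfl (by simpa using him)
    rw [hzre] at hz
    have hx : z.re ^ 2 + c * z.re + b = 0 := by exact_mod_cast hz
    rw [hzre, Complex.norm_real, Real.norm_eq_abs]
    exact le_max_of_le_right (abs_le_largeRoot_of_quadratic_root hx)

lemma exists_quadratic_root_norm_eq_sqrt (h : c ^ 2 < 4 * b) :
    ∃ z : ℂ, z ^ 2 + c * z + b = 0 ∧ ‖z‖ = √b := by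
  set s := √(4 * b - c ^ 2)
  have hs : s ^ 2 = 4 * b - c ^ 2 := Real.sq_sqrt (by linarith)
  have hs' : (s : ℂ) ^ 2 = 4 * b - c ^ 2 := by exact_mod_cast hs
  refine ⟨⟨-c / 2, s / 2⟩, ?_, ?_⟩
  · have hz : (⟨-c / 2, s / 2⟩ : ℂ) = (-c + s * I) / 2 := by apply Complex.ext <;> simp
    rw [hz]
    linear_combination (s ^ 2 / 4 : ℂ) * I_sq - hs' / 4
  · rw [Complex.norm_def, Complex.normSq_mk]
    congr 1
    linear_combination hs / 4

lemma exists_quadratic_root_abs_eq_largeRoot (h : 4 * b ≤ c ^ 2) :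
    ∃ x : ℝ, x ^ 2 + c * x + b = 0 ∧ |x| = largeRoot b |c| := by
  have hy := largeRoot_sq_sub_mul_add (b := b) (c := |c|) (by rwa [sq_abs])
  have hy0 := largeRoot_nonneg (b := b) (abs_nonneg c)
  rcases le_total 0 c with hc | hc
  · rw [abs_of_nonneg hc] at hy hy0 ⊢
    exact ⟨-largeRoot b c, by linear_combination hy, by rw [abs_neg, abs_of_nonneg hy0]⟩
  · rw [abs_of_nonpos hc] at hy hy0 ⊢
    exact ⟨largeRoot b (-c), by linear_combination hy, abs_of_nonneg hy0⟩

theorem isGreatest_norm_quadratic_roots (b c : ℝ) :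
    IsGreatest {x : ℝ | ∃ z : ℂ, z ^ 2 + c * z + b = 0 ∧ x = ‖z‖} (quadRootRadius b c) := by
  refine ⟨?_, fun _ ⟨z, hz, hx⟩ => hx ▸ norm_le_quadRootRadius hz⟩
  rcases lt_or_ge (c ^ 2) (4 * b) with h | h
  · obtain ⟨z, hz, hnorm⟩ := exists_quadratic_root_norm_eq_sqrt h
    refine ⟨z, hz, ?_⟩
    rw [hnorm, quadRootRadius, max_eq_left (largeRoot_le_sqrt (by rw [sq_abs]; exact h.le))]
  · obtain ⟨x, hx, habs⟩ := exists_quadratic_root_abs_eq_largeRoot h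
    refine ⟨x, by exact_mod_cast hx, ?_⟩
    rw [Complex.norm_real, Real.norm_eq_abs, habs, quadRootRadius,
      max_eq_right (sqrt_le_largeRoot (by rwa [sq_abs]) (abs_nonneg c))]

end QuadraticRoots

theorem isGreatest_norm_quadratic_roots_of_monotoneOn {g : ℝ → ℝ} {m L : ℝ} (b : ℝ)
    (hmL : m ≤ L) (hg : MonotoneOn g (Icc m L)) :
    IsGreatest {x : ℝ | ∃ lam ∈ Icc m L, ∃ z : ℂ, z ^ 2 + (g lam : ℂ) * z + b = 0 ∧ x = ‖z‖}
      (max √b (max (largeRoot b (g L)) (largeRoot b (-g m)))) := by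
  have hm : m ∈ Icc m L := left_mem_Icc.2 hmL
  have hL : L ∈ Icc m L := right_mem_Icc.2 hmL
  have bound : ∀ lam ∈ Icc m L,
      quadRootRadius b (g lam) ≤ max √b (max (largeRoot b (g L)) (largeRoot b (-g m))) := by
    intro lam hlam
    refine max_le_max le_rfl ?_
    rcases le_total 0 (g lam) with h | h
    · have hle : g lam ≤ g L := hg hlam hL hlam.2
      rw [abs_of_nonneg h]
      exact le_max_of_le_left (monotoneOn_largeRoot h (h.trans hle) hle)
    · have hle : -g lam ≤ -g m := neg_le_neg (hg hm hlam hlam.1)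
      rw [abs_of_nonpos h]
      exact le_max_of_le_right
        (monotoneOn_largeRoot (neg_nonneg.2 h) ((neg_nonneg.2 h).trans hle) hle)
  have hendpoints : max √b (max (largeRoot b (g L)) (largeRoot b (-g m))) =
      max (quadRootRadius b (g m)) (quadRootRadius b (g L)) := by
    refine le_antisymm (max_le (le_max_of_le_left (le_max_left _ _)) (max_le ?_ ?_))
      (max_le (bound m hm) (bound L hL))
    · exact le_max_of_le_right (le_max_of_le_right largeRoot_le_largeRoot_abs)
    · exact le_max_of_le_left (le_max_of_le_right (abs_neg (g m) ▸ largeRoot_le_largeRoot_abs))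
  have hmem : ∀ lam ∈ Icc m L, quadRootRadius b (g lam) ∈
      {x : ℝ | ∃ lam ∈ Icc m L, ∃ z : ℂ, z ^ 2 + (g lam : ℂ) * z + b = 0 ∧ x = ‖z‖} := by
    intro lam hlam
    obtain ⟨z, hz, hx⟩ := (isGreatest_norm_quadratic_roots b (g lam)).1
    exact ⟨lam, hlam, z, hz, hx⟩
  refine ⟨?_, fun _ ⟨lam, hlam, z, hz, hx⟩ =>
    hx ▸ (norm_le_quadRootRadius hz).trans (bound lam hlam)⟩
  rw [hendpoints]
  rcases max_choice (quadRootRadius b (g m)) (quadRootRadius b (g L)) with h | h <;> rw [h]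
  exacts [hmem m hm, hmem L hL]

theorem heavy_ball_spectral_radius_closed_form_general
    (m L α β : ℝ) (hmL : m ≤ L)
    (hα0 : 0 < α)
    (γm γL : ℝ) (hγm : γm = m * α - 1 - β) (hγL : γL = L * α - 1 - β)
    (R : ℝ)
    (hR : R = sSup {x : ℝ | ∃ lam ∈ Set.Icc m L, ∃ z : ℂ,
      z ^ 2 + ((α * lam - 1 - β : ℝ) : ℂ) * z + (β : ℂ) = 0 ∧
      x = ‖z‖}) :
    (γL ^ 2 < 4 * β → γm ^ 2 < 4 * β → R = Real.sqrt β) ∧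
    (4 * β ≤ γL ^ 2 → γm ^ 2 < 4 * β →
      R = max (Real.sqrt β) ((γL + Real.sqrt (γL ^ 2 - 4 * β)) / 2)) ∧
    (γL ^ 2 < 4 * β → 4 * β ≤ γm ^ 2 →
      R = max (Real.sqrt β) ((-γm + Real.sqrt (γm ^ 2 - 4 * β)) / 2)) ∧
    (4 * β ≤ γL ^ 2 → 4 * β ≤ γm ^ 2 →
      R = max (Real.sqrt β)
        (max ((γL + Real.sqrt (γL ^ 2 - 4 * β)) / 2)
          ((-γm + Real.sqrt (γm ^ 2 - 4 * β)) / 2))) := by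
  have hg : MonotoneOn (fun lam => α * lam - 1 - β) (Icc m L) :=
    fun _ _ _ _ h => by dsimp only; nlinarith
  have hRγ : R = max √β (max (largeRoot β γL) (largeRoot β (-γm))) := by
    rw [hR, (isGreatest_norm_quadratic_roots_of_monotoneOn β hmL hg).csSup_eq, hγm, hγL,
      mul_comm m, mul_comm L]
  have hγLle : γL ^ 2 ≤ 4 * β → largeRoot β γL ≤ √β := largeRoot_le_sqrt
  have hγmle : γm ^ 2 ≤ 4 * β → largeRoot β (-γm) ≤ √β :=
    fun h => largeRoot_le_sqrt (by rwa [neg_sq])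
  have hneg : largeRoot β (-γm) = (-γm + √(γm ^ 2 - 4 * β)) / 2 := by rw [largeRoot, neg_sq]
  refine ⟨fun hL hm => ?_, fun _ hm => ?_, fun hL _ => ?_, fun _ _ => ?_⟩
  · rw [hRγ, max_eq_left (max_le (hγLle hL.le) (hγmle hm.le))]
  · rw [hRγ, max_comm (largeRoot β γL), ← max_assoc, max_eq_left (hγmle hm.le)]
    rfl
  · rw [hRγ, ← max_assoc, max_eq_left (hγLle hL.le), hneg]
  · rw [hRγ, hneg]
    rfl

/-- Closed form (eq. (26) of the paper) for
`R(α, β) = sup_{λ ∈ [m,L]} max{|z| : z² + (αλ − 1 − β)z + β = 0}`, the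
worst-case spectral radius of the heavy ball iteration matrix. -/
theorem heavy_ball_spectral_radius_closed_form
    (m L α β : ℝ) (hm : 0 < m) (hmL : m ≤ L)
    (hβ0 : 0 ≤ β) (hβ1 : β < 1) (hα0 : 0 < α) (hα1 : α < 2 * (1 + β) / L)
    (γm γL : ℝ) (hγm : γm = m * α - 1 - β) (hγL : γL = L * α - 1 - β)
    (R : ℝ)
    (hR : R = sSup {x : ℝ | ∃ lam ∈ Set.Icc m L, ∃ z : ℂ,
      z ^ 2 + ((α * lam - 1 - β : ℝ) : ℂ) * z + (β : ℂ) = 0 ∧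
      x = ‖z‖}) :
    (γL ^ 2 < 4 * β → γm ^ 2 < 4 * β → R = Real.sqrt β) ∧
    (4 * β ≤ γL ^ 2 → γm ^ 2 < 4 * β →
      R = max (Real.sqrt β) ((γL + Real.sqrt (γL ^ 2 - 4 * β)) / 2)) ∧
    (γL ^ 2 < 4 * β → 4 * β ≤ γm ^ 2 →
      R = max (Real.sqrt β) ((-γm + Real.sqrt (γm ^ 2 - 4 * β)) / 2)) ∧
    (4 * β ≤ γL ^ 2 → 4 * β ≤ γm ^ 2 →
      R = max (Real.sqrt β)
        (max ((γL + Real.sqrt (γL ^ 2 - 4 * β)) / 2)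
          ((-γm + Real.sqrt (γm ^ 2 - 4 * β)) / 2))) :=
  heavy_ball_spectral_radius_closed_form_general m L α β hmL hα0 γm γL hγm hγL R hR
end

section
/- Let L > m > 0 and ω > 0, and define f : ℝ → ℝ by f(x) = ((L−m)/4)( ((L+m)/(L−m)) x² + (2/ω²) sin(ωx) − (2/ω) x cos(ωx) ). Then f is differentiable with f′(x) = ((L+m)/2) x + ((L−m)/2) x sin(ωx), f attains its global minimum at x* = 0, and f satisfies the sector condition (m x − f′(x))(L x − f′(x)) ≤ 0 for all x ∈ ℝ; hence f belongs to the class F¹_{m,L} (and f is not convex when L > m). -/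
open Real

/-! Writing `f'(x) = g(x) x` with `g(x) = (L+m)/2 + ((L-m)/2) sin(ωx) ∈ [m, L]`, the sector condition
is `x² (m - g(x)) (L - g(x)) ≤ 0`, and `x f'(x) ≥ 0` makes `0` a global minimiser. Convexity fails
because `f'` drops from `L t / ω` to `m (t + π) / ω` across each half period `[t/ω, (t+π)/ω]` on
which `sin(ω·)` goes from `1` to `-1`, which is a decrease once `t` is large. -/

theorem apply_zero_le_of_mul_deriv_nonneg {f : ℝ → ℝ} (hf : Differentiable ℝ f)
    (hsign : ∀ x, 0 ≤ x * deriv f x) (x : ℝ) : f 0 ≤ f x := by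
  rcases le_or_gt 0 x with hx | hx
  · have hmono : MonotoneOn f (Set.Ici 0) := by
      refine monotoneOn_of_deriv_nonneg (convex_Ici 0) hf.continuous.continuousOn
        hf.differentiableOn fun y hy => ?_
      rw [interior_Ici] at hy
      exact nonneg_of_mul_nonneg_right (hsign y) hy
    exact hmono Set.self_mem_Ici hx hx
  · have hanti : AntitoneOn f (Set.Iic 0) := by
      refine antitoneOn_of_deriv_nonpos (convex_Iic 0) hf.continuous.continuousOn
        hf.differentiableOn fun y hy => ?_
      rw [interior_Iic] at hy
      exact nonpos_of_mul_nonneg_right (hsign y) hy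
    exact hanti hx.le Set.self_mem_Iic hx.le

theorem mul_sub_mul_mul_sub_mul_nonpos {m L c : ℝ} (hc : c ∈ Set.Icc m L) (x : ℝ) :
    (m * x - c * x) * (L * x - c * x) ≤ 0 := by
  have h : (m * x - c * x) * (L * x - c * x) = x ^ 2 * ((c - m) * (c - L)) := by ring
  rw [h]
  exact mul_nonpos_of_nonneg_of_nonpos (sq_nonneg x)
    (mul_nonpos_of_nonneg_of_nonpos (sub_nonneg.2 hc.1) (sub_nonpos.2 hc.2))

namespace SectorExample

variable (m L ω : ℝ)

noncomputable def fn (x : ℝ) : ℝ :=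
  (L - m) / 4 * ((L + m) / (L - m) * x ^ 2 + 2 / ω ^ 2 * sin (ω * x) - 2 / ω * x * cos (ω * x))

noncomputable def gain (x : ℝ) : ℝ :=
  (L + m) / 2 + (L - m) / 2 * sin (ω * x)

variable {m L ω}

theorem hasDerivAt_fn (hmL : m ≠ L) (hω : ω ≠ 0) (x : ℝ) :
    HasDerivAt (fn m L ω) (gain m L ω x * x) x := by
  have hLm : L - m ≠ 0 := sub_ne_zero.2 hmL.symm
  have hωx : HasDerivAt (fun x => ω * x) ω x := by
    simpa using (hasDerivAt_id x).const_mul ω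
  have hsin := (hasDerivAt_sin (ω * x)).comp x hωx
  have hcos := (hasDerivAt_cos (ω * x)).comp x hωx
  have hlin : HasDerivAt (fun x => 2 / ω * x) (2 / ω) x := by
    simpa using (hasDerivAt_id x).const_mul (2 / ω)
  have hsq : HasDerivAt (fun x => x ^ 2) (2 * x) x := by simpa using hasDerivAt_pow 2 x
  have H : HasDerivAt (fn m L ω) ((L - m) / 4 * ((L + m) / (L - m) * (2 * x) +
      2 / ω ^ 2 * (cos (ω * x) * ω) - (2 / ω * cos (ω * x) + 2 / ω * x * (-sin (ω * x) * ω)))) x :=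
    (((hsq.const_mul _).add (hsin.const_mul _)).sub (hlin.mul hcos)).const_mul _
  refine H.congr_deriv ?_
  simp only [gain]
  field_simp
  ring

theorem gain_mem_Icc (hmL : m ≤ L) (x : ℝ) : gain m L ω x ∈ Set.Icc m L := by
  have h₁ := neg_one_le_sin (ω * x)
  have h₂ := sin_le_one (ω * x)
  constructor <;> simp only [gain] <;> nlinarith

theorem not_monotone_gain_mul_self (hmL : m < L) (hω : 0 < ω) :
    ¬Monotone fun x => gain m L ω x * x := by
  intro hmono
  obtain ⟨k, hk⟩ := exists_nat_gt (m / (2 * (L - m)))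
  set t := π / 2 + k * (2 * π)
  have hsin_t : sin t = 1 := by rw [sin_add_nat_mul_two_pi, sin_pi_div_two]
  have hsin_tπ : sin (t + π) = -1 := by rw [sin_add_pi, hsin_t]
  have hgain_t : gain m L ω (t / ω) = L := by
    simp only [gain, mul_div_cancel₀ t hω.ne', hsin_t]; ring
  have hgain_tπ : gain m L ω ((t + π) / ω) = m := by
    simp only [gain, mul_div_cancel₀ (t + π) hω.ne', hsin_tπ]; ring
  have hle := hmono (div_le_div_of_nonneg_right (le_add_of_nonneg_right (a := t) pi_pos.le) hω.le)
  simp only [hgain_t, hgain_tπ, mul_div_assoc'] at hle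
  rw [div_le_div_iff_of_pos_right hω] at hle
  have hk' : m < 2 * (L - m) * k := by
    rwa [div_lt_iff₀' (by linarith)] at hk
  have ht : (L - m) * t = (L - m) * (π / 2) + 2 * (L - m) * k * π := by ring
  nlinarith [mul_lt_mul_of_pos_right hk' pi_pos, mul_pos (sub_pos.2 hmL) pi_pos]

end SectorExample

open SectorExample in
/-- The function `f(x) = ((L−m)/4)( ((L+m)/(L−m))x² + (2/ω²)sin(ωx)
− (2/ω)x cos(ωx) )` is differentiable with derivative
`f′(x) = ((L+m)/2)x + ((L−m)/2)x sin(ωx)`, attains its global minimum at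
`x* = 0`, satisfies the sector condition `(mx − f′(x))(Lx − f′(x)) ≤ 0` for
all `x` (so `f ∈ F¹_{m,L}`), and is not convex. -/
theorem sector_bounded_nonconvex_example (m L ω : ℝ)
    (hm : 0 < m) (hmL : m < L) (hω : 0 < ω)
    (f : ℝ → ℝ)
    (hf : ∀ x : ℝ, f x = (L - m) / 4 *
      ((L + m) / (L - m) * x ^ 2 + 2 / ω ^ 2 * Real.sin (ω * x) -
        2 / ω * x * Real.cos (ω * x))) :
    Differentiable ℝ f ∧
    (∀ x : ℝ, deriv f x = (L + m) / 2 * x + (L - m) / 2 * x * Real.sin (ω * x)) ∧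
    (∀ x : ℝ, f 0 ≤ f x) ∧
    (∀ x : ℝ, (m * x - deriv f x) * (L * x - deriv f x) ≤ 0) ∧
    ¬ConvexOn ℝ Set.univ f := by
  obtain rfl : f = fn m L ω := funext hf
  have hderiv x : HasDerivAt (fn m L ω) (gain m L ω x * x) x :=
    hasDerivAt_fn hmL.ne hω.ne' x
  have hdiff : Differentiable ℝ (fn m L ω) := fun x => (hderiv x).differentiableAt
  have hgain := gain_mem_Icc (ω := ω) hmL.le
  refine ⟨hdiff, fun x => by rw [(hderiv x).deriv, gain]; ring, ?_, ?_, ?_⟩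
  · refine apply_zero_le_of_mul_deriv_nonneg hdiff fun x => ?_
    rw [(hderiv x).deriv, ← mul_assoc, mul_comm x, mul_assoc]
    exact mul_nonneg (hm.le.trans (hgain x).1) (mul_self_nonneg x)
  · intro x
    rw [(hderiv x).deriv]
    exact mul_sub_mul_mul_sub_mul_nonpos (hgain x) x
  · intro hconv
    refine not_monotone_gain_mul_self hmL hω fun a b hab => ?_
    have := hconv.monotoneOn_deriv (fun x _ => hdiff x) (Set.mem_univ a) (Set.mem_univ b) hab
    rwa [(hderiv a).deriv, (hderiv b).deriv] at this
end

section
/- Define f : ℝ → ℝ by f(x) = (25/2)x² for x < 1, f(x) = (1/2)x² + 24x − 12 for 1 ≤ x < 2, and f(x) = (25/2)x² − 24x + 36 for x ≥ 2. Then f is differentiable, attains its minimum at x* = 0, and satisfies the sector condition (13x − f′(x))(25x − f′(x)) ≤ 0 for all x ∈ ℝ; moreover, since 25/13 < 3 + 2√2, the heavy ball iteration x_{t+1} = x_t − α f′(x_t) + β(x_t − x_{t−1}) with α = 4/(5 + √13)² and β = ((5 − √13)/(5 + √13))² converges to 0 from every pair of initial points x_{−1}, x₀ ∈ ℝ. 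-/
/-!
The derivative of `f` is `25 x` below `1` and `x + 24`, resp. `25 x - 24`, above it; all three lie
in the sector between `13 x` and `25 x`, so `x f'(x) ≥ 0` and `0` is the minimiser.
With `q = (√L - √m)/(√L + √m)`, Polyak's parameters satisfy `1 + β - α m = 2q` and
`1 + β - α L = -2q`, so the sector condition gives `|(1 + β) y - α f'(y)| ≤ 2q |y|`, hence
`|x_{t+2}| ≤ 2q |x_{t+1}| + q² |x_t|`. The condition `L/m < 3 + 2√2` is exactly `2q + q² < 1`,
and then `max |x_t| |x_{t+1}|` is antitone and shrinks by the factor `2q + q²` every two steps.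
-/

open Real Filter Topology

theorem hasDerivAt_ite_lt {f₁ f₂ f₁' f₂' : ℝ → ℝ} {a : ℝ}
    (h₁ : ∀ x, HasDerivAt f₁ (f₁' x) x) (h₂ : ∀ x, HasDerivAt f₂ (f₂' x) x)
    (hval : f₁ a = f₂ a) (hder : f₁' a = f₂' a) (x : ℝ) :
    HasDerivAt (fun y => if y < a then f₁ y else f₂ y) (if x < a then f₁' x else f₂' x) x := by
  rcases lt_trichotomy x a with hx | rfl | hx
  · rw [if_pos hx]
    refine (h₁ x).congr_of_eventuallyEq ?_
    filter_upwards [Iio_mem_nhds hx] with y hy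
    exact if_pos hy
  · rw [if_neg (lt_irrefl x)]
    have hleft : HasDerivWithinAt (fun y => if y < x then f₁ y else f₂ y) (f₂' x) (Set.Iic x) x :=
      hder ▸ (h₁ x).hasDerivWithinAt.congr
        (fun y hy => by
          rcases (Set.mem_Iic.mp hy).lt_or_eq with hy | rfl
          · exact if_pos hy
          · simp [hval])
        (by simp [hval])
    have hright : HasDerivWithinAt (fun y => if y < x then f₁ y else f₂ y) (f₂' x) (Set.Ici x) x :=
      (h₂ x).hasDerivWithinAt.congr (fun y hy => if_neg (Set.mem_Ici.mp hy).not_gt) (by simp)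
    simpa only [Set.Iic_union_Ici, hasDerivWithinAt_univ] using hleft.union hright
  · rw [if_neg hx.not_gt]
    refine (h₂ x).congr_of_eventuallyEq ?_
    filter_upwards [Ioi_mem_nhds hx] with y hy
    exact if_neg (Set.mem_Ioi.mp hy).not_gt

section Sector

variable {m L : ℝ}

theorem mul_nonneg_of_sector {y g : ℝ} (hm : 0 < m) (hL : 0 < L)
    (h : (m * y - g) * (L * y - g) ≤ 0) : 0 ≤ y * g := by
  nlinarith [mul_pos hm hL, sq_nonneg y, sq_nonneg g]

theorem le_of_sector_deriv {f : ℝ → ℝ} (hf : Differentiable ℝ f) (hm : 0 < m) (hL : 0 < L)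
    (hsec : ∀ x, (m * x - deriv f x) * (L * x - deriv f x) ≤ 0) (x : ℝ) : f 0 ≤ f x := by
  have hsign (y : ℝ) : 0 ≤ y * deriv f y := mul_nonneg_of_sector hm hL (hsec y)
  rcases le_total 0 x with hx | hx
  · refine monotoneOn_of_deriv_nonneg (convex_Ici 0) hf.continuous.continuousOn
      hf.differentiableOn (fun y hy => ?_) Set.self_mem_Ici hx hx
    rw [interior_Ici] at hy
    exact nonneg_of_mul_nonneg_right (hsign y) hy
  · refine antitoneOn_of_deriv_nonpos (convex_Iic 0) hf.continuous.continuousOn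
      hf.differentiableOn (fun y hy => ?_) hx Set.self_mem_Iic hx
    rw [interior_Iic] at hy
    exact nonpos_of_mul_nonneg_right (hsign y) hy

/-- `c y - α g ∓ r y` are `α (m y - g)` and `α (L y - g)`, so the sector condition bounds
`(c y - α g)²` by `(r y)²`. -/
theorem abs_sub_mul_le_of_sector {c α r y g : ℝ} (hr : 0 ≤ r) (hcm : c - α * m = r)
    (hcL : c - α * L = -r) (h : (m * y - g) * (L * y - g) ≤ 0) :
    |c * y - α * g| ≤ r * |y| := by
  have key : (c * y - α * g) ^ 2 - (r * y) ^ 2 = α ^ 2 * ((m * y - g) * (L * y - g)) := by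
    linear_combination (y * (c * y - α * g + r * y)) * hcm + (y * α * (m * y - g)) * hcL
  rw [← abs_of_nonneg hr, ← abs_mul, ← sq_le_sq]
  nlinarith [mul_nonpos_of_nonneg_of_nonpos (sq_nonneg α) h]

end Sector

theorem tendsto_zero_of_abs_le_two_step {x : ℕ → ℝ} {a b : ℝ} (ha : 0 ≤ a) (hb : 0 ≤ b)
    (hab : a + b < 1) (h : ∀ t, |x (t + 2)| ≤ a * |x (t + 1)| + b * |x t|) :
    Tendsto x atTop (𝓝 0) := by
  set M : ℕ → ℝ := fun t => max |x t| |x (t + 1)|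
  have hM0 (t : ℕ) : 0 ≤ M t := (abs_nonneg _).trans (le_max_left _ _)
  have hstep (t : ℕ) : |x (t + 2)| ≤ (a + b) * M t := by
    have := mul_le_mul_of_nonneg_left (le_max_right |x t| |x (t + 1)|) ha
    have := mul_le_mul_of_nonneg_left (le_max_left |x t| |x (t + 1)|) hb
    linarith [h t]
  have hanti : Antitone M := antitone_nat_of_succ_le fun t =>
    max_le (le_max_right _ _) ((hstep t).trans (by nlinarith [hM0 t]))
  have hcontract (t : ℕ) : M (t + 2) ≤ (a + b) * M t :=
    max_le (hstep t) ((hstep (t + 1)).trans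
      (mul_le_mul_of_nonneg_left (hanti (Nat.le_succ t)) (by linarith)))
  have hlim := tendsto_atTop_ciInf hanti ⟨0, Set.forall_mem_range.mpr hM0⟩
  have hle : ⨅ t, M t ≤ (a + b) * ⨅ t, M t :=
    le_of_tendsto_of_tendsto' (hlim.comp (tendsto_add_atTop_nat 2)) (hlim.const_mul _) hcontract
  have hzero : ⨅ t, M t = 0 := by nlinarith [le_ciInf hM0]
  rw [hzero] at hlim
  exact squeeze_zero_norm (fun t => le_max_left _ _) hlim

section Polyak

variable {s S : ℝ}

theorem polyak_one_add_momentum_sub_step_mul_m (h : S + s ≠ 0) :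
    1 + ((S - s) / (S + s)) ^ 2 - 4 / (S + s) ^ 2 * s ^ 2 = 2 * ((S - s) / (S + s)) := by
  field_simp
  ring

theorem polyak_one_add_momentum_sub_step_mul_L (h : S + s ≠ 0) :
    1 + ((S - s) / (S + s)) ^ 2 - 4 / (S + s) ^ 2 * S ^ 2 = -(2 * ((S - s) / (S + s))) := by
  field_simp
  ring

/-- `2q + q² < 1` amounts to `(S - s)² < 2 s²`. -/
theorem polyak_rate_lt_one (hs : 0 < s) (hS : 0 ≤ S) (h : S < (1 + √2) * s) :
    2 * ((S - s) / (S + s)) + ((S - s) / (S + s)) ^ 2 < 1 := by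
  have hsum : 0 < S + s := by linarith
  have h2 : √2 ^ 2 = 2 := sq_sqrt zero_le_two
  have hsq : (S - s) ^ 2 < 2 * s ^ 2 := by
    rw [← h2, ← mul_pow]
    exact sq_lt_sq' (by nlinarith [sqrt_nonneg 2]) (by linarith)
  rw [div_pow, ← sub_pos]
  field_simp
  nlinarith

end Polyak

theorem tendsto_zero_of_heavyBall_polyak {g : ℝ → ℝ} {m L : ℝ} (hm : 0 < m) (hmL : m ≤ L)
    (hκ : L / m < 3 + 2 * √2) (hsec : ∀ y, (m * y - g y) * (L * y - g y) ≤ 0) {x : ℕ → ℝ}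
    (hx : ∀ t, x (t + 2) = x (t + 1) - 4 / (√L + √m) ^ 2 * g (x (t + 1)) +
      ((√L - √m) / (√L + √m)) ^ 2 * (x (t + 1) - x t)) :
    Tendsto x atTop (𝓝 0) := by
  set s := √m
  set S := √L
  set q := (S - s) / (S + s) with hq
  have hs : 0 < s := sqrt_pos.mpr hm
  have hsS : s ≤ S := sqrt_le_sqrt hmL
  have hsum : S + s ≠ 0 := by positivity
  have hq0 : 0 ≤ q := div_nonneg (by linarith) (by positivity)
  have hm' : s ^ 2 = m := sq_sqrt hm.le
  have hL' : S ^ 2 = L := sq_sqrt (hm.le.trans hmL)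
  have hSs : S < (1 + √2) * s := by
    have hκ' : S ^ 2 < ((1 + √2) * s) ^ 2 := by
      rw [hL', mul_pow, hm', ← div_lt_iff₀ hm]
      nlinarith [sq_sqrt (zero_le_two : (0 : ℝ) ≤ 2)]
    exact lt_of_pow_lt_pow_left₀ 2 (by positivity) hκ'
  refine tendsto_zero_of_abs_le_two_step (by linarith) (sq_nonneg q)
    (polyak_rate_lt_one hs (hs.le.trans hsS) hSs) fun t => ?_
  have hdamped : |(1 + q ^ 2) * x (t + 1) - 4 / (S + s) ^ 2 * g (x (t + 1))| ≤
      2 * q * |x (t + 1)| := by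
    refine abs_sub_mul_le_of_sector (m := m) (L := L) (by linarith) ?_ ?_ (hsec _)
    · rw [hq, ← hm', polyak_one_add_momentum_sub_step_mul_m hsum]
    · rw [hq, ← hL', polyak_one_add_momentum_sub_step_mul_L hsum]
  calc |x (t + 2)|
      = |((1 + q ^ 2) * x (t + 1) - 4 / (S + s) ^ 2 * g (x (t + 1))) - q ^ 2 * x t| := by
        rw [hx t]; ring_nf
    _ ≤ 2 * q * |x (t + 1)| + q ^ 2 * |x t| := by
        refine (abs_sub _ _).trans (add_le_add hdamped ?_)
        rw [abs_mul, abs_of_nonneg (sq_nonneg q)]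

noncomputable def lessardDeriv (x : ℝ) : ℝ :=
  if x < 1 then 25 * x else if x < 2 then x + 24 else 25 * x - 24

theorem lessard_hasDerivAt {f : ℝ → ℝ} (hf : ∀ x : ℝ, f x =
      if x < 1 then 25 / 2 * x ^ 2
      else if x < 2 then 1 / 2 * x ^ 2 + 24 * x - 12
      else 25 / 2 * x ^ 2 - 24 * x + 36) (x : ℝ) :
    HasDerivAt f (lessardDeriv x) x := by
  obtain rfl : f = _ := funext hf
  have h₁ (x : ℝ) : HasDerivAt (fun y : ℝ => 25 / 2 * y ^ 2) (25 * x) x :=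
    ((hasDerivAt_pow 2 x).const_mul (25 / 2 : ℝ)).congr_deriv (by push_cast; ring)
  have h₂ (x : ℝ) : HasDerivAt (fun y : ℝ => 1 / 2 * y ^ 2 + 24 * y - 12) (x + 24) x :=
    ((((hasDerivAt_pow 2 x).const_mul (1 / 2 : ℝ)).add
      ((hasDerivAt_id x).const_mul 24)).sub_const 12).congr_deriv (by push_cast; ring)
  have h₃ (x : ℝ) : HasDerivAt (fun y : ℝ => 25 / 2 * y ^ 2 - 24 * y + 36) (25 * x - 24) x :=
    ((((hasDerivAt_pow 2 x).const_mul (25 / 2 : ℝ)).sub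
      ((hasDerivAt_id x).const_mul 24)).add_const 36).congr_deriv (by push_cast; ring)
  have h₂₃ := hasDerivAt_ite_lt (a := 2) h₂ h₃ (by norm_num) (by norm_num)
  exact hasDerivAt_ite_lt (a := 1) h₁ h₂₃ (by norm_num) (by norm_num) x

theorem lessardDeriv_sector (x : ℝ) :
    (13 * x - lessardDeriv x) * (25 * x - lessardDeriv x) ≤ 0 := by
  unfold lessardDeriv
  split_ifs with h₁ h₂
  · nlinarith
  · nlinarith
  · nlinarith

/-- Lessard–Recht–Packard's piecewise quadratic example: the function is
differentiable, attains its minimum at `x* = 0`, satisfies the sector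
condition with `m = 13`, `L = 25`; since `25/13 < 3 + 2√2`, the heavy ball
method with Polyak's parameters tuned to `m = 13`, `L = 25` converges to `0`
from every pair of initial points. -/
theorem lessard_example_global_convergence
    (f : ℝ → ℝ)
    (hf : ∀ x : ℝ, f x =
      if x < 1 then 25 / 2 * x ^ 2
      else if x < 2 then 1 / 2 * x ^ 2 + 24 * x - 12
      else 25 / 2 * x ^ 2 - 24 * x + 36)
    (α β : ℝ)
    (hα : α = 4 / (5 + Real.sqrt 13) ^ 2)
    (hβ : β = ((5 - Real.sqrt 13) / (5 + Real.sqrt 13)) ^ 2) :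
    Differentiable ℝ f ∧
    (∀ x : ℝ, f 0 ≤ f x) ∧
    (∀ x : ℝ, (13 * x - deriv f x) * (25 * x - deriv f x) ≤ 0) ∧
    (25 / 13 : ℝ) < 3 + 2 * Real.sqrt 2 ∧
    (∀ x : ℕ → ℝ,
      (∀ t, x (t + 2) = x (t + 1) - α * deriv f (x (t + 1)) + β * (x (t + 1) - x t)) →
      Tendsto x atTop (nhds 0)) := by
  have hdiff : Differentiable ℝ f := fun x => (lessard_hasDerivAt hf x).differentiableAt
  have hsec (x : ℝ) : (13 * x - deriv f x) * (25 * x - deriv f x) ≤ 0 := by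
    rw [(lessard_hasDerivAt hf x).deriv]
    exact lessardDeriv_sector x
  have hκ : (25 / 13 : ℝ) < 3 + 2 * √2 := by linarith [sqrt_nonneg 2]
  have hsqrt25 : √25 = 5 := by
    rw [show (25 : ℝ) = 5 ^ 2 by norm_num, sqrt_sq (by norm_num)]
  refine ⟨hdiff, le_of_sector_deriv hdiff (by norm_num) (by norm_num) hsec, hsec, hκ,
    fun x hx => tendsto_zero_of_heavyBall_polyak (by norm_num) (by norm_num) hκ hsec ?_⟩
  simpa only [hsqrt25, ← hα, ← hβ] using hx
end
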